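/- arXiv:2304.03924 — 2 statements merged into one kernel-verified Lean document; each statement's English description precedes it below -/
import Mathlib

section
/- Under assumption (A), the empirical estimator of the semi-Markov kernel is strongly consistent: for every initial state i₀ ∈ E, almost surely under P_{i₀}, q̂_{ij}(k,M) → q_{ij}(k) as M → ∞ for every (i,j,k) ∈ Ẽ := E×E×ℕ. -/
/-!
Let `A_m` be the event that the step `(J, X)` made right after the `m`-th visit of `J` to `i` is
`(j, k)`. Up to time `M` the chain has visited `i` exactly `N_i(M)` times, so `q̂_{ij}(k, M)` is
the average of the indicators of `A_0, …, A_{N_i(M)-1}`. By the Markov property at visit times,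
each `A_m` has probability `q_{ij}(k)`, and for `m < m'` the step after the `m'`-th visit is
independent of everything before it, so the indicators are pairwise independent and identically
distributed; Etemadi's strong law of large numbers makes their averages converge to `q_{ij}(k)`.
Finally `N_i(M) → ∞` almost surely: irreducibility and recurrence make every state recur
infinitely often, and `q_{ij}(0) = 0` makes `S` strictly increasing, so `N(M) → ∞`.

The Markov property is only given on cylinders; countable additivity over the words of length
`t + 1` extends it to every event determined by the first `t` steps, and an induction on the
horizon extends it to future events.
-/

open MeasureTheory Filter Topology Finset ProbabilityTheory

noncomputable section

namespace SMCPaper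

variable {E : Type} [Fintype E] [DecidableEq E] {Ω : Type} [MeasurableSpace Ω]

/-- `q` is a (discrete-time) semi-Markov kernel on the finite state space `E`:
nonnegative entries, `q i j 0 = 0`, and total mass `1` from every state. -/
def IsSemiMarkovKernel (q : E → E → ℕ → ℝ) : Prop :=
  (∀ i j k, 0 ≤ q i j k) ∧ (∀ i j, q i j 0 = 0) ∧
    ∀ i, HasSum (fun p : E × ℕ => q i p.1 p.2) 1

/-- The sojourn times `X n = S n − S (n−1)` (so `X 0 = 0` when `S 0 = 0`). -/
def Xproc (S : ℕ → Ω → ℕ) (n : ℕ) (ω : Ω) : ℕ := S n ω - S (n - 1) ω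

/-- `(J, S)` is a Markov renewal chain with semi-Markov kernel `q` under the family of
probability measures `P i₀` (the chain starting at `i₀`):  `J 0 = i₀`, `S 0 = 0` a.s., and
the process `(J, X)` is a time-homogeneous Markov chain with transitions
`P(J_{n+1} = j, X_{n+1} = k | J_n = i, past) = q i j k`. -/
def IsMarkovRenewalChain (P : E → Measure Ω) (J : ℕ → Ω → E) (S : ℕ → Ω → ℕ)
    (q : E → E → ℕ → ℝ) : Prop :=
  (∀ i, IsProbabilityMeasure (P i)) ∧
  (∀ n i, MeasurableSet {ω | J n ω = i}) ∧
  (∀ n k, MeasurableSet {ω | S n ω = k}) ∧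
  (∀ i₀, P i₀ {ω | J 0 ω = i₀ ∧ S 0 ω = 0} = 1) ∧
  (∀ i₀ (n : ℕ) (js : ℕ → E) (xs : ℕ → ℕ),
    P i₀ ({ω | J (n+1) ω = js (n+1) ∧ Xproc S (n+1) ω = xs (n+1)} ∩
        {ω | ∀ l ≤ n, J l ω = js l ∧ Xproc S l ω = xs l}) =
      ENNReal.ofReal (q (js n) (js (n+1)) (xs (n+1))) *
        P i₀ {ω | ∀ l ≤ n, J l ω = js l ∧ Xproc S l ω = xs l})

/-- First hitting time (after time `0`) of the state `j` by the embedded chain `J`. -/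
def tau (J : ℕ → Ω → E) (j : E) (ω : Ω) : ℕ := sInf {n | 1 ≤ n ∧ J n ω = j}

/-- Mean recurrence time `μ_{ii} = E_i[S_{τ_i}]`. -/
def mrt (P : E → Measure Ω) (J : ℕ → Ω → E) (S : ℕ → Ω → ℕ) (i : E) : ℝ :=
  ∫ ω, (S (tau J i ω) ω : ℝ) ∂(P i)

/-- Assumption (A): irreducibility of the embedded chain, aperiodicity of the Markov
renewal chain, and positive recurrence. -/
def AssumptionA (P : E → Measure Ω) (J : ℕ → Ω → E) (S : ℕ → Ω → ℕ) : Prop :=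
  (∀ i j : E, 0 < P i {ω | ∃ n, 1 ≤ n ∧ J n ω = j}) ∧
  (∀ i : E, ∀ d : ℕ,
      (∀ k, 0 < P i {ω | S (tau J i ω) ω = k} → d ∣ k) → d = 1) ∧
  (∀ i : E, (∀ᵐ ω ∂(P i), ∃ n, 1 ≤ n ∧ J n ω = i) ∧
      Integrable (fun ω => (S (tau J i ω) ω : ℝ)) (P i))

/-- `N(M)`: the number of jumps of the Markov renewal chain up to time `M`. -/
def Ncnt (S : ℕ → Ω → ℕ) (M : ℕ) (ω : Ω) : ℕ := sSup {n | S n ω ≤ M}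

/-- `N_i(M)`: the number of visits of the embedded chain to `i` before time `M`. -/
def Nvis (J : ℕ → Ω → E) (S : ℕ → Ω → ℕ) (i : E) (M : ℕ) (ω : Ω) : ℕ :=
  ∑ n ∈ Finset.Icc 1 (Ncnt S M ω), if J (n-1) ω = i then 1 else 0

/-- The empirical (nonparametric) estimator `q̂(M)` of the semi-Markov kernel. -/
def qhat (J : ℕ → Ω → E) (S : ℕ → Ω → ℕ) (M : ℕ) (ω : Ω) (i j : E) (k : ℕ) : ℝ :=
  (∑ n ∈ Finset.Icc 1 (Ncnt S M ω),
      if J (n-1) ω = i ∧ J n ω = j ∧ Xproc S n ω = k then (1:ℝ) else 0) /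
    (Nvis J S i M ω : ℝ)

/-- The entry of a matrix sequence at `e = (i, j, k)`. -/
def entry (A : E → E → ℕ → ℝ) (e : E × E × ℕ) : ℝ := A e.1 e.2.1 e.2.2

/-- Matrix convolution of matrix sequences. -/
def mconv (A B : E → E → ℕ → ℝ) : E → E → ℕ → ℝ := fun i j k =>
  ∑ l ∈ Finset.range (k+1), ∑ u, A i u l * B u j (k - l)

/-- Convolution of scalar sequences. -/
def sconv (a b : ℕ → ℝ) : ℕ → ℝ := fun k => ∑ l ∈ Finset.range (k+1), a l * b (k - l)

/-- The identity `δI` for matrix convolution. -/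
def deltaI : E → E → ℕ → ℝ := fun i j k => if i = j ∧ k = 0 then 1 else 0

/-- `n`-fold matrix convolution power. -/
def mpow (A : E → E → ℕ → ℝ) : ℕ → E → E → ℕ → ℝ
  | 0 => deltaI
  | n + 1 => mconv A (mpow A n)

/-- The convolution inverse `(δI − A)^{(−1)} = ∑_{n ≥ 0} A^{(n)}`. -/
def psiOf (A : E → E → ℕ → ℝ) : E → E → ℕ → ℝ := fun i j k => ∑' n, mpow A n i j k

/-- The operator `S`: `(S A)_{ij}(k) = 1{i=j} ∑_{j'} ∑_{k' > k} A_{ij'}(k')`. -/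
def Sop (A : E → E → ℕ → ℝ) : E → E → ℕ → ℝ := fun i j k =>
  if i = j then ∑' p : E × ℕ, if k < p.2 then A i p.1 p.2 else 0 else 0

/-- Cumulative sum of a scalar sequence, `(cumul a) k = ∑_{l ≤ k} a l`. -/
def cumul (a : ℕ → ℝ) (k : ℕ) : ℝ := ∑ l ∈ Finset.range (k+1), a l

/-- `H_j(k) = ∑_{j'} ∑_{k' ≤ k} q_{jj'}(k')`, the sojourn time c.d.f. in state `j`. -/
def Hseq (q : E → E → ℕ → ℝ) (j : E) (k : ℕ) : ℝ :=
  ∑ j', ∑ l ∈ Finset.range (k+1), q j j' l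

/-- The matrix sequence `δ^{et}` with entry `1` at `et` and `0` elsewhere. -/
def deltaM (et : E × E × ℕ) : E → E → ℕ → ℝ := fun i j k => if (i, j, k) = et then 1 else 0

/-- The matrix sequence `q^{it}` with `q^{it}_{ij}(k) = 1{i = it} q_{ij}(k)`. -/
def qres (q : E → E → ℕ → ℝ) (it : E) : E → E → ℕ → ℝ :=
  fun i j k => if i = it then q i j k else 0

/-- The semi-Markov chain `Z_k = J_{N(k)}` associated to `(J, S)`. -/
def Zproc (J : ℕ → Ω → E) (S : ℕ → Ω → ℕ) (k : ℕ) (ω : Ω) : E := J (Ncnt S k ω) ω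

/-- The distribution matrix sequence `P_{ij}(k) = P_i(Z_k = j)` of the semi-Markov chain. -/
def Pdist (P : E → Measure Ω) (J : ℕ → Ω → E) (S : ℕ → Ω → ℕ) (i j : E) (k : ℕ) : ℝ :=
  (P i {ω | Zproc J S k ω = j}).toReal

/-- The estimator `P̂(M) = ψ̂(M) * S q̂(M)` of the distribution matrix sequence. -/
def Phat (J : ℕ → Ω → E) (S : ℕ → Ω → ℕ) (M : ℕ) (ω : Ω) : E → E → ℕ → ℝ :=
  mconv (psiOf (qhat J S M ω)) (Sop (qhat J S M ω))

/-- The reliability vector sequence `R_i(k) = P_i(T_D > k)`, for `i ∈ U`,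
where `D = Uᶜ` and `T_D` is the first entrance time of `Z` into `D`. -/
def Rrel (P : E → Measure Ω) (J : ℕ → Ω → E) (S : ℕ → Ω → ℕ) (U : Finset E)
    (i : E) (k : ℕ) : ℝ :=
  (P i {ω | ∀ l ≤ k, Zproc J S l ω ∈ U}).toReal

/-- Restriction of a matrix sequence to `Ũ = U × U × ℕ` (extended by `0`). -/
def restrictUU (U : Finset E) (A : E → E → ℕ → ℝ) : E → E → ℕ → ℝ :=
  fun i j k => if i ∈ U ∧ j ∈ U then A i j k else 0

/-- Convolution of a matrix sequence with a vector sequence. -/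
def mvconv (A : E → E → ℕ → ℝ) (v : E → ℕ → ℝ) : E → ℕ → ℝ := fun i k =>
  ∑ l ∈ Finset.range (k+1), ∑ u, A i u l * v u (k - l)

/-- The diagonal `(A)_U` of a matrix sequence, as a vector sequence. -/
def diagOf (A : E → E → ℕ → ℝ) : E → ℕ → ℝ := fun i k => A i i k

/-- The estimator `R̂(M) = ψ̂_UU(M) * (S q̂(M))_U` of the reliability vector sequence. -/
def Rhat (J : ℕ → Ω → E) (S : ℕ → Ω → ℕ) (U : Finset E) (M : ℕ) (ω : Ω) : E → ℕ → ℝ :=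
  mvconv (psiOf (restrictUU U (qhat J S M ω))) (diagOf (Sop (qhat J S M ω)))

/-- `μG` is the law of a centered Gaussian family indexed by `ι` with covariance `V`:
every finite linear combination of coordinates has a centered normal distribution with the
appropriate variance. -/
def IsCenteredGaussianLaw {ι : Type} (μG : Measure (ι → ℝ)) (V : ι → ι → ℝ) : Prop :=
  ∀ a : ι →₀ ℝ,
    Measure.map (fun x => ∑ e ∈ a.support, a e * x e) μG =
      gaussianReal 0
        (Real.toNNReal (∑ e ∈ a.support, ∑ e' ∈ a.support, a e * V e e' * a e'))

/-- `(Z_e)_{e ∈ ι}` is a centered Gaussian family with covariance `V` under `P`. -/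
def IsCenteredGaussianFamily {ι : Type} (P : Measure Ω) (Z : ι → Ω → ℝ)
    (V : ι → ι → ℝ) : Prop :=
  (∀ e, Measurable (Z e)) ∧
  ∀ a : ι →₀ ℝ,
    Measure.map (fun ω => ∑ e ∈ a.support, a e * Z e ω) P =
      gaussianReal 0
        (Real.toNNReal (∑ e ∈ a.support, ∑ e' ∈ a.support, a e * V e e' * a e'))

/-- The covariance matrix `V^q` of the CLT for `q̂`, with `μr i = μ_{ii}`. -/
def Vq (q : E → E → ℕ → ℝ) (μr : E → ℝ) : (E × E × ℕ) → (E × E × ℕ) → ℝ := fun e e' =>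
  μr e.1 * (if e.1 = e'.1 then 1 else 0) * entry q e *
    ((if e.2.1 = e'.2.1 ∧ e.2.2 = e'.2.2 then 1 else 0) - entry q e')

end SMCPaper

open Function
open scoped ENNReal

section General

lemma Nat.exists_count_eq_of_lt_count {p : ℕ → Prop} [DecidablePred p] {k n : ℕ}
    (h : k < Nat.count p n) : ∃ t < n, p t ∧ Nat.count p t = k := by
  induction n with
  | zero => simp at h
  | succ n ih =>
    by_cases hk : k < Nat.count p n
    · obtain ⟨t, ht, hpt, hct⟩ := ih hk
      exact ⟨t, by omega, hpt, hct⟩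
    · rw [Nat.count_succ] at h
      by_cases hpn : p n
      · exact ⟨n, lt_add_one n, hpn, by simp only [hpn, if_true] at h; omega⟩
      · simp only [hpn, if_false] at h; omega

lemma Nat.count_congr {p p' : ℕ → Prop} [DecidablePred p] [DecidablePred p'] {n : ℕ}
    (h : ∀ l < n, p l ↔ p' l) : Nat.count p n = Nat.count p' n :=
  le_antisymm (Nat.count_mono_left fun l hl => (h l hl).1)
    (Nat.count_mono_left fun l hl => (h l hl).2)

lemma Nat.sum_range_ite_count {M : Type*} [AddCommMonoid M] (p : ℕ → Prop) [DecidablePred p]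
    (G : ℕ → M) (N : ℕ) :
    ∑ t ∈ range N, (if p t then G (Nat.count p t) else 0) = ∑ m ∈ range (Nat.count p N), G m := by
  induction N with
  | zero => simp
  | succ N ih =>
    rw [sum_range_succ, ih, Nat.count_succ]
    split_ifs <;> simp [sum_range_succ]

lemma Nat.tendsto_count_atTop {p : ℕ → Prop} [DecidablePred p]
    (h : ∀ m, ∃ t, p t ∧ Nat.count p t = m) : Tendsto (Nat.count p) atTop atTop := by
  refine tendsto_atTop_atTop.2 fun m => ?_
  obtain ⟨t, hp, hc⟩ := h m
  refine ⟨t + 1, fun N hN => ?_⟩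
  have := Nat.count_monotone p hN
  rw [Nat.count_succ, if_pos hp, hc] at this
  omega

lemma StrictMono.tendsto_sSup_le_atTop {s : ℕ → ℕ} (hs : StrictMono s) :
    Tendsto (fun M => sSup {n | s n ≤ M}) atTop atTop :=
  tendsto_atTop_atTop.2 fun b => ⟨s b, fun _ hM =>
    le_csSup ⟨_, fun n hn => (hs.id_le n).trans hn⟩ hM⟩

lemma Finset.sum_Icc_one_eq_sum_range {M : Type*} [AddCommMonoid M] (f : ℕ → M) (N : ℕ) :
    ∑ n ∈ Icc 1 N, f n = ∑ t ∈ range N, f (t + 1) := by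
  induction N with
  | zero => rfl
  | succ N ih => rw [sum_Icc_succ_top (Nat.le_add_left 1 N), ih, sum_range_succ]

variable {Ω : Type} [MeasurableSpace Ω] {μ : Measure Ω} {A B : Set Ω}

lemma ProbabilityTheory.IndepSet.indepFun_indicator_one (h : IndepSet A B μ) :
    IndepFun (A.indicator (1 : Ω → ℝ)) (B.indicator (1 : Ω → ℝ)) μ := by
  rw [IndepFun_iff_Indep]
  exact indep_of_indep_of_le_right (indep_of_indep_of_le_left h
    (MeasurableSpace.comap_indicator_const_le_generateFrom_singleton A (1 : ℝ)))
    (MeasurableSpace.comap_indicator_const_le_generateFrom_singleton B (1 : ℝ))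

lemma ProbabilityTheory.identDistrib_indicator_one [IsFiniteMeasure μ] (hA : MeasurableSet A)
    (hB : MeasurableSet B) (h : μ A = μ B) :
    IdentDistrib (A.indicator (1 : Ω → ℝ)) (B.indicator 1) μ μ := by
  classical
  refine ⟨(measurable_one.indicator hA).aemeasurable, (measurable_one.indicator hB).aemeasurable,
    Measure.ext fun s hs => ?_⟩
  rw [Measure.map_apply (measurable_one.indicator hA) hs,
    Measure.map_apply (measurable_one.indicator hB) hs, Pi.one_def,
    Set.indicator_const_preimage_eq_union, Set.indicator_const_preimage_eq_union]
  split_ifs <;>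
    simp [measure_compl hA (measure_ne_top μ A), measure_compl hB (measure_ne_top μ B), h]

end General

namespace SMCPaper

section Path

variable {E Ω : Type} {J : ℕ → Ω → E} {S : ℕ → Ω → ℕ}

def traj (J : ℕ → Ω → E) (S : ℕ → Ω → ℕ) (ω : Ω) (l : ℕ) : E × ℕ := (J l ω, Xproc S l ω)

def cylinder (J : ℕ → Ω → E) (S : ℕ → Ω → ℕ) (c : ℕ → E × ℕ) (t : ℕ) : Set Ω :=
  {ω | ∀ l ≤ t, traj J S ω l = c l}

/-- The path that follows the word `c` and then stays at its last letter. -/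
def extendWord {t : ℕ} (c : Fin (t + 1) → E × ℕ) (l : ℕ) : E × ℕ := c (Fin.clamp l t)

lemma extendWord_of_le {t : ℕ} (c : Fin (t + 1) → E × ℕ) {l : ℕ} (hl : l ≤ t) :
    extendWord c l = c ⟨l, Nat.lt_succ_of_le hl⟩ := by
  simp [extendWord, Fin.clamp, Nat.min_eq_left hl]

lemma setOf_traj_eq_iUnion_cylinder {t : ℕ} {Φ : (ℕ → E × ℕ) → Prop}
    (hΦ : DependsOn Φ (Set.Iic t)) :
    {ω | Φ (traj J S ω)} =
      ⋃ c : {c : Fin (t + 1) → E × ℕ // Φ (extendWord c)}, cylinder J S (extendWord c.1) t := by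
  ext ω
  simp only [Set.mem_ofPred_eq, Set.mem_iUnion, cylinder]
  constructor
  · intro hω
    have hext : ∀ l ≤ t, traj J S ω l = extendWord (fun i : Fin (t + 1) => traj J S ω i) l :=
      fun l hl => (extendWord_of_le (fun i : Fin (t + 1) => traj J S ω i) hl).symm
    exact ⟨⟨_, hΦ (fun l hl => hext l hl) ▸ hω⟩, hext⟩
  · rintro ⟨⟨c, hc⟩, hω⟩
    exact hΦ (fun l hl => hω l hl) ▸ hc

lemma dependsOn_and_eq_succ {t : ℕ} {Φ : (ℕ → E × ℕ) → Prop} (hΦ : DependsOn Φ (Set.Iic t))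
    (e : E × ℕ) : DependsOn (fun w => Φ w ∧ w (t + 1) = e) (Set.Iic (t + 1)) := fun w w' hw => by
  dsimp only
  rw [hΦ fun l hl => hw l (Set.Iic_subset_Iic.2 t.le_succ hl), hw (t + 1) (Set.mem_Iic.2 le_rfl)]

lemma pairwise_disjoint_cylinder_extendWord (t : ℕ) :
    Pairwise (Disjoint on fun c : Fin (t + 1) → E × ℕ => cylinder J S (extendWord c) t) := by
  intro c c' hne
  refine Set.disjoint_left.2 fun ω hω hω' => hne (funext fun i => ?_)
  have hi : (i : ℕ) ≤ t := Nat.lt_succ_iff.1 i.2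
  simpa [extendWord_of_le _ hi] using (hω i hi).symm.trans (hω' i hi)

namespace IsMarkovRenewalChain

variable [MeasurableSpace Ω] {P : E → Measure Ω} {q : E → E → ℕ → ℝ}

lemma isProbabilityMeasure (h : IsMarkovRenewalChain P J S q) (x : E) :
    IsProbabilityMeasure (P x) :=
  h.1 x

lemma measurableSet_traj_eq (h : IsMarkovRenewalChain P J S q) (t : ℕ) (e : E × ℕ) :
    MeasurableSet {ω | traj J S ω t = e} := by
  have hS : ∀ n, Measurable (S n) := fun n => measurable_to_countable' fun k => h.2.2.1 n k
  have hX : MeasurableSet {ω | Xproc S t ω = e.2} :=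
    ((hS t).sub (hS (t - 1))) (measurableSet_singleton e.2)
  convert (h.2.1 t e.1).inter hX using 1
  ext ω
  simp [traj, Prod.ext_iff]

lemma measurableSet_cylinder (h : IsMarkovRenewalChain P J S q) (c : ℕ → E × ℕ) (t : ℕ) :
    MeasurableSet (cylinder J S c t) := by
  simp only [cylinder, Set.ofPred_forall]
  exact .iInter fun l => .iInter fun _ => h.measurableSet_traj_eq l (c l)

lemma measure_J_zero (h : IsMarkovRenewalChain P J S q) (x : E) : P x {ω | J 0 ω = x} = 1 := by
  have := h.isProbabilityMeasure x
  exact le_antisymm prob_le_one (h.2.2.2.1 x ▸ measure_mono fun ω hω => hω.1)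

lemma measure_J_zero_inter (h : IsMarkovRenewalChain P J S q) (x : E) (s : Set Ω) :
    P x ({ω | J 0 ω = x} ∩ s) = P x s := by
  have := h.isProbabilityMeasure x
  rw [Set.inter_comm,
    measure_inter_conull ((prob_compl_eq_zero_iff (h.2.1 0 x)).2 (h.measure_J_zero x))]

lemma measure_cylinder_inter_traj_succ (h : IsMarkovRenewalChain P J S q) (x : E)
    (c : ℕ → E × ℕ) (t : ℕ) (e : E × ℕ) :
    P x (cylinder J S c t ∩ {ω | traj J S ω (t + 1) = e}) =
      ENNReal.ofReal (q (c t).1 e.1 e.2) * P x (cylinder J S c t) := by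
  let c' : ℕ → E × ℕ := fun l => if l ≤ t then c l else e
  have hcyl : {ω | ∀ l ≤ t, J l ω = (c' l).1 ∧ Xproc S l ω = (c' l).2} = cylinder J S c t := by
    ext ω
    simp only [cylinder, traj, Set.mem_ofPred_eq, Prod.ext_iff]
    exact forall₂_congr fun l hl => by simp only [c', if_pos hl]
  have := h.2.2.2.2 x t (fun l => (c' l).1) (fun l => (c' l).2)
  simp only [hcyl, c', if_pos le_rfl, if_neg (Nat.not_succ_le_self t)] at this
  rw [Set.inter_comm, ← this]
  congr 2
  ext ω
  simp [traj, Prod.ext_iff]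

variable [Countable E]

lemma measurableSet_setOf_traj (h : IsMarkovRenewalChain P J S q) {t : ℕ}
    {Φ : (ℕ → E × ℕ) → Prop} (hΦ : DependsOn Φ (Set.Iic t)) :
    MeasurableSet {ω | Φ (traj J S ω)} := by
  rw [setOf_traj_eq_iUnion_cylinder hΦ]
  exact .iUnion fun c => h.measurableSet_cylinder _ t

theorem measure_inter_traj_succ (h : IsMarkovRenewalChain P J S q) (x : E) {t : ℕ}
    {Φ : (ℕ → E × ℕ) → Prop} (hΦ : DependsOn Φ (Set.Iic t)) {i : E}
    (hΦi : ∀ w, Φ w → (w t).1 = i) (e : E × ℕ) :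
    P x ({ω | Φ (traj J S ω)} ∩ {ω | traj J S ω (t + 1) = e}) =
      ENNReal.ofReal (q i e.1 e.2) * P x {ω | Φ (traj J S ω)} := by
  have hdisj := (pairwise_disjoint_cylinder_extendWord (J := J) (S := S) t).comp_of_injective
    (f := fun c : {c : Fin (t + 1) → E × ℕ // Φ (extendWord c)} => c.1) Subtype.val_injective
  rw [setOf_traj_eq_iUnion_cylinder hΦ, Set.iUnion_inter,
    measure_iUnion (hdisj.mono fun _ _ => .mono Set.inter_subset_left Set.inter_subset_left)
      fun c => (h.measurableSet_cylinder _ t).inter (h.measurableSet_traj_eq _ e),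
    measure_iUnion hdisj fun c => h.measurableSet_cylinder _ t, ← ENNReal.tsum_mul_left]
  refine tsum_congr fun c => ?_
  rw [h.measure_cylinder_inter_traj_succ, hΦi _ c.2]

lemma measure_iUnion_inter_traj_succ (h : IsMarkovRenewalChain P J S q) (x : E)
    {Φ : ℕ → (ℕ → E × ℕ) → Prop} (hΦ : ∀ t, DependsOn (Φ t) (Set.Iic t)) {i : E}
    (hΦi : ∀ t w, Φ t w → (w t).1 = i)
    (hdisj : Pairwise (Disjoint on fun t => {ω | Φ t (traj J S ω)})) (e : E × ℕ) :
    P x (⋃ t, {ω | Φ t (traj J S ω)} ∩ {ω | traj J S ω (t + 1) = e}) =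
      ENNReal.ofReal (q i e.1 e.2) * P x (⋃ t, {ω | Φ t (traj J S ω)}) := by
  rw [measure_iUnion (fun t t' hne => (hdisj hne).mono Set.inter_subset_left
      Set.inter_subset_left) fun t => (h.measurableSet_setOf_traj (hΦ t)).inter
        (h.measurableSet_traj_eq _ e),
    measure_iUnion hdisj fun t => h.measurableSet_setOf_traj (hΦ t), ← ENNReal.tsum_mul_left]
  exact tsum_congr fun t => h.measure_inter_traj_succ x (hΦ t) (hΦi t) e

lemma ae_Xproc_succ_ne_zero (h : IsMarkovRenewalChain P J S q) (hq0 : ∀ i j, q i j 0 = 0)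
    (x : E) : ∀ᵐ ω ∂(P x), ∀ t, Xproc S (t + 1) ω ≠ 0 := by
  refine ae_all_iff.2 fun t => ae_iff.2 (measure_mono_null (t := ⋃ p : E × E,
    {ω | (traj J S ω t).1 = p.1} ∩ {ω | traj J S ω (t + 1) = (p.2, 0)}) ?_ ?_)
  · intro ω hω
    exact Set.mem_iUnion.2 ⟨(J t ω, J (t + 1) ω), rfl, Prod.ext rfl (not_not.1 hω)⟩
  · refine measure_iUnion_null fun p => ?_
    rw [h.measure_inter_traj_succ x (Φ := fun w => (w t).1 = p.1)
      (fun w w' hw => by dsimp only; rw [hw t (Set.mem_Iic.2 le_rfl)]) (fun w hw => hw),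
      hq0, ENNReal.ofReal_zero, zero_mul]

end IsMarkovRenewalChain

end Path

section Shift

variable {E Ω : Type} {J : ℕ → Ω → E} {S : ℕ → Ω → ℕ}

def shiftedEvent (J : ℕ → Ω → E) (S : ℕ → Ω → ℕ) (V : (ℕ → E × ℕ) → Prop) (s : ℕ) : Set Ω :=
  {ω | V (fun r => traj J S ω (s + r))}

/-- `V` for the path that first steps to `e` and then follows `w` from its time `1` on. -/
def afterStep (V : (ℕ → E × ℕ) → Prop) (e : E × ℕ) (w : ℕ → E × ℕ) : Prop :=
  V fun r => if r = 1 then e else w (r - 1)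

lemma dependsOn_afterStep {m : ℕ} {V : (ℕ → E × ℕ) → Prop}
    (hV : DependsOn V (Set.Icc 1 (m + 1))) (e : E × ℕ) :
    DependsOn (afterStep V e) (Set.Icc 1 m) := by
  intro w w' hw
  refine hV fun r ⟨hr1, hr⟩ => ?_
  split_ifs with h
  · rfl
  · exact hw (r - 1) ⟨by omega, by omega⟩

lemma dependsOn_shift {m : ℕ} {V : (ℕ → E × ℕ) → Prop} (hV : DependsOn V (Set.Icc 1 m))
    (s : ℕ) : DependsOn (fun w : ℕ → E × ℕ => V fun r => w (s + r)) (Set.Iic (s + m)) :=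
  fun _ _ hw => hV fun r hr => hw (s + r) (Nat.add_le_add_left hr.2 s)

lemma shiftedEvent_eq_iUnion {m : ℕ} {V : (ℕ → E × ℕ) → Prop}
    (hV : DependsOn V (Set.Icc 1 (m + 1))) (s : ℕ) :
    shiftedEvent J S V s =
      ⋃ e, {ω | traj J S ω (s + 1) = e} ∩ shiftedEvent J S (afterStep V e) (s + 1) := by
  ext ω
  simp only [shiftedEvent, afterStep, Set.mem_iUnion, Set.mem_inter_iff, Set.mem_ofPred_eq]
  have hsplit : V (fun r => traj J S ω (s + r)) ↔
      V fun r => if r = 1 then traj J S ω (s + 1) else traj J S ω (s + 1 + (r - 1)) := by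
    refine Eq.to_iff (hV fun r ⟨hr1, _⟩ => ?_)
    split_ifs with h
    · rw [h]
    · congr 1; omega
  rw [hsplit]
  exact ⟨fun hω => ⟨_, rfl, hω⟩, fun ⟨e, he, hω⟩ => he ▸ hω⟩

namespace IsMarkovRenewalChain

variable [MeasurableSpace Ω] [Countable E] {P : E → Measure Ω} {q : E → E → ℕ → ℝ}

lemma measurableSet_shiftedEvent (h : IsMarkovRenewalChain P J S q) {m : ℕ}
    {V : (ℕ → E × ℕ) → Prop} (hV : DependsOn V (Set.Icc 1 m)) (s : ℕ) :
    MeasurableSet (shiftedEvent J S V s) :=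
  h.measurableSet_setOf_traj (dependsOn_shift hV s)

lemma measure_inter_shiftedEvent_eq_tsum (h : IsMarkovRenewalChain P J S q) {m : ℕ}
    {V : (ℕ → E × ℕ) → Prop} (hV : DependsOn V (Set.Icc 1 (m + 1))) (x : E) {t : ℕ}
    {Φ : (ℕ → E × ℕ) → Prop} (hΦ : DependsOn Φ (Set.Iic t)) :
    P x ({ω | Φ (traj J S ω)} ∩ shiftedEvent J S V t) =
      ∑' e, P x ({ω | Φ (traj J S ω) ∧ traj J S ω (t + 1) = e} ∩
        shiftedEvent J S (afterStep V e) (t + 1)) := by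
  rw [shiftedEvent_eq_iUnion hV, Set.inter_iUnion, measure_iUnion
    (fun e e' hne => Set.disjoint_left.2 fun ω hω hω' => hne (hω.2.1.symm.trans hω'.2.1))
    fun e => (h.measurableSet_setOf_traj hΦ).inter ((h.measurableSet_traj_eq _ e).inter
      (h.measurableSet_shiftedEvent (dependsOn_afterStep hV e) _))]
  simp only [← Set.inter_assoc, Set.ofPred_and]

theorem measure_inter_shiftedEvent (h : IsMarkovRenewalChain P J S q) {m : ℕ}
    {V : (ℕ → E × ℕ) → Prop} (hV : DependsOn V (Set.Icc 1 m)) (x : E) {t : ℕ}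
    {Φ : (ℕ → E × ℕ) → Prop} (hΦ : DependsOn Φ (Set.Iic t)) {i : E}
    (hΦi : ∀ w, Φ w → (w t).1 = i) :
    P x ({ω | Φ (traj J S ω)} ∩ shiftedEvent J S V t) =
      P x {ω | Φ (traj J S ω)} * P i (shiftedEvent J S V 0) := by
  induction m generalizing V x t Φ i with
  | zero =>
    have := h.isProbabilityMeasure i
    have hconst : ∀ w w', V w = V w' := fun w w' => hV fun r hr => by
      simp only [Set.mem_Icc] at hr; omega
    by_cases hv : ∀ w, V w
    · have huniv : ∀ s, shiftedEvent J S V s = Set.univ := fun s => Set.eq_univ_of_forall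
        fun ω => hv _
      simp [huniv]
    · obtain ⟨w₀, hw₀⟩ := not_forall.1 hv
      have hempty : ∀ s, shiftedEvent J S V s = ∅ := fun s => Set.eq_empty_of_forall_notMem
        fun ω hω => hw₀ (hconst _ w₀ ▸ hω)
      simp [hempty]
  | succ m ih =>
    -- First-step analysis; for the trivial past `{J 0 = i}` it also computes
    -- `P i (shiftedEvent J S V 0)`.
    have hfirst : ∀ (x : E) {t : ℕ} {Φ : (ℕ → E × ℕ) → Prop}, DependsOn Φ (Set.Iic t) →
        (∀ w, Φ w → (w t).1 = i) →
        P x ({ω | Φ (traj J S ω)} ∩ shiftedEvent J S V t) = P x {ω | Φ (traj J S ω)} *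
          ∑' e : E × ℕ, ENNReal.ofReal (q i e.1 e.2) *
            P e.1 (shiftedEvent J S (afterStep V e) 0) := by
      intro x t Φ hΦ hΦi
      rw [h.measure_inter_shiftedEvent_eq_tsum hV x hΦ, ← ENNReal.tsum_mul_left]
      refine tsum_congr fun e => ?_
      rw [ih (dependsOn_afterStep hV e) x (dependsOn_and_eq_succ hΦ e) fun w hw => by rw [hw.2],
        Set.ofPred_and, h.measure_inter_traj_succ x hΦ hΦi]
      ring
    have hstart : DependsOn (fun w : ℕ → E × ℕ => (w 0).1 = i) (Set.Iic 0) :=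
      fun w w' hw => by dsimp only; rw [hw 0 (Set.mem_Iic.2 le_rfl)]
    have hΦ₀ := hfirst i hstart fun w hw => hw
    rw [show {ω | (traj J S ω 0).1 = i} = {ω | J 0 ω = i} from rfl, h.measure_J_zero_inter,
      h.measure_J_zero, one_mul] at hΦ₀
    rw [hfirst x hΦ hΦi, hΦ₀]

theorem measure_inter_iUnion_shiftedEvent (h : IsMarkovRenewalChain P J S q) (x : E) {t : ℕ}
    {Φ : (ℕ → E × ℕ) → Prop} (hΦ : DependsOn Φ (Set.Iic t)) {i : E}
    (hΦi : ∀ w, Φ w → (w t).1 = i) {V : ℕ → (ℕ → E × ℕ) → Prop}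
    (hV : ∀ s, DependsOn (V s) (Set.Icc 1 s)) (hmono : ∀ s w, V s w → V (s + 1) w) :
    P x ({ω | Φ (traj J S ω)} ∩ ⋃ s, shiftedEvent J S (V s) t) =
      P x {ω | Φ (traj J S ω)} * P i (⋃ s, shiftedEvent J S (V s) 0) := by
  have hmono' : ∀ r, Monotone fun s => shiftedEvent J S (V s) r :=
    fun r => monotone_nat_of_le_succ fun s ω hω => hmono s _ hω
  rw [Set.inter_iUnion, Monotone.measure_iUnion fun s s' hss' =>
      Set.inter_subset_inter_right _ (hmono' t hss'),
    (hmono' 0).measure_iUnion, ENNReal.mul_iSup]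
  exact iSup_congr fun s => h.measure_inter_shiftedEvent (hV s) x hΦ hΦi

end IsMarkovRenewalChain

end Shift

section Returns

variable {E Ω : Type} {J : ℕ → Ω → E} {S : ℕ → Ω → ℕ}

def ReturnsAvoiding (x : E) (B : Set E) (s : ℕ) (w : ℕ → E × ℕ) : Prop :=
  ∃ n ∈ Set.Icc 1 s, (w n).1 = x ∧ ∀ l ∈ Set.Icc 1 n, (w l).1 ∉ B

def returnAvoiding (J : ℕ → Ω → E) (S : ℕ → Ω → ℕ) (x : E) (B : Set E) : Set Ω :=
  ⋃ s, shiftedEvent J S (ReturnsAvoiding x B s) 0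

lemma returnAvoiding_empty (x : E) :
    returnAvoiding J S x ∅ = {ω | ∃ n, 1 ≤ n ∧ J n ω = x} := by
  ext ω
  simp only [returnAvoiding, shiftedEvent, ReturnsAvoiding, traj, zero_add, Set.mem_iUnion,
    Set.mem_ofPred_eq, Set.mem_Icc, Set.notMem_empty, not_false_eq_true, implies_true, and_true]
  exact ⟨fun ⟨s, n, hn, hx⟩ => ⟨n, hn.1, hx⟩, fun ⟨n, hn, hx⟩ => ⟨n, n, ⟨hn, le_rfl⟩, hx⟩⟩

lemma dependsOn_returnsAvoiding (x : E) (B : Set E) (s : ℕ) :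
    DependsOn (ReturnsAvoiding x B s) (Set.Icc 1 s) := by
  intro w w' hw
  refine propext (exists_congr fun n => and_congr_right fun hn => and_congr (by rw [hw n hn])
    (forall₂_congr fun l hl => by rw [hw l ⟨hl.1, hl.2.trans hn.2⟩]))

namespace IsMarkovRenewalChain

variable [MeasurableSpace Ω] [Countable E] {P : E → Measure Ω} {q : E → E → ℕ → ℝ}

lemma measurableSet_returnAvoiding (h : IsMarkovRenewalChain P J S q) (x : E) (B : Set E) :
    MeasurableSet (returnAvoiding J S x B) :=
  .iUnion fun s => h.measurableSet_shiftedEvent (dependsOn_returnsAvoiding x B s) 0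

end IsMarkovRenewalChain

end Returns

section Visits

variable {E Ω : Type} [DecidableEq E] {J : ℕ → Ω → E} {S : ℕ → Ω → ℕ}

/-- `t` is the time of the `m`-th visit of the path to `x`, counting from `0`. -/
def IsVisit (x : E) (m t : ℕ) (w : ℕ → E × ℕ) : Prop :=
  (w t).1 = x ∧ Nat.count (fun l => (w l).1 = x) t = m

def IsVisitAvoiding (x : E) (B : Set E) (m t : ℕ) (w : ℕ → E × ℕ) : Prop :=
  IsVisit x m t w ∧ ∀ l ≤ t, (w l).1 ∉ B

def visitAvoiding (J : ℕ → Ω → E) (S : ℕ → Ω → ℕ) (x : E) (B : Set E) (m : ℕ) : Set Ω :=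
  ⋃ t, {ω | IsVisitAvoiding x B m t (traj J S ω)}

lemma dependsOn_isVisit (x : E) (m t : ℕ) : DependsOn (IsVisit x m t) (Set.Iic t) := by
  intro w w' hw
  have hcount : Nat.count (fun l => (w l).1 = x) t = Nat.count (fun l => (w' l).1 = x) t :=
    Nat.count_congr fun l hl => by rw [hw l (Set.mem_Iic.2 hl.le)]
  simp only [IsVisit, hw t (Set.mem_Iic.2 le_rfl), hcount]

lemma dependsOn_isVisitAvoiding (x : E) (B : Set E) (m t : ℕ) :
    DependsOn (IsVisitAvoiding x B m t) (Set.Iic t) := by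
  intro w w' hw
  simp only [IsVisitAvoiding, dependsOn_isVisit x m t hw]
  congr 1
  exact propext (forall₂_congr fun l hl => by rw [hw l hl])

lemma IsVisit.eq_of_eq {x : E} {m t t' : ℕ} {w : ℕ → E × ℕ} (h : IsVisit x m t w)
    (h' : IsVisit x m t' w) : t = t' :=
  Nat.count_injective h.1 h'.1 (h.2.trans h'.2.symm)

lemma IsVisit.lt_of_lt {x : E} {m m' t t' : ℕ} {w : ℕ → E × ℕ} (h : IsVisit x m t w)
    (h' : IsVisit x m' t' w) (hm : m < m') : t < t' :=
  Nat.lt_of_count_lt_count (p := fun l => (w l).1 = x) (h.2 ▸ h'.2 ▸ hm)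

lemma IsVisit.le {x : E} {m t : ℕ} {w : ℕ → E × ℕ} (h : IsVisit x m t w) : m ≤ t :=
  h.2 ▸ Nat.count_le _

@[simp]
lemma isVisitAvoiding_empty {x : E} {m t : ℕ} {w : ℕ → E × ℕ} :
    IsVisitAvoiding x ∅ m t w ↔ IsVisit x m t w := by
  simp [IsVisitAvoiding]

/-- The `(m+1)`-th visit is the first return after the `m`-th one. -/
lemma exists_isVisitAvoiding_succ_iff {x : E} {B : Set E} {m : ℕ} {w : ℕ → E × ℕ} :
    (∃ t', IsVisitAvoiding x B (m + 1) t' w) ↔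
      ∃ t, IsVisitAvoiding x B m t w ∧ ∃ s, ReturnsAvoiding x B s fun r => w (t + r) := by
  constructor
  · rintro ⟨t', ⟨hx', hc'⟩, hB'⟩
    obtain ⟨t, htt', hx, hc⟩ := Nat.exists_count_eq_of_lt_count (hc'.symm ▸ lt_add_one m)
    refine ⟨t, ⟨⟨hx, hc⟩, fun l hl => hB' l (by omega)⟩, t' - t, t' - t, ⟨by omega, le_rfl⟩,
      by simpa only [Nat.add_sub_cancel' htt'.le] using hx',
      fun l hl => hB' _ (by have := hl.2; omega)⟩
  · rintro ⟨t, ⟨⟨hx, hc⟩, hB⟩, s, n, hn, hxn, hBn⟩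
    have hret : ∃ n, 1 ≤ n ∧ (w (t + n)).1 = x := ⟨n, hn.1, hxn⟩
    obtain ⟨hn₀, hx₀⟩ := Nat.find_spec hret
    have hn₀n : Nat.find hret ≤ n := Nat.find_min' hret ⟨hn.1, hxn⟩
    refine ⟨t + Nat.find hret, ⟨hx₀, ?_⟩, fun l hl => ?_⟩
    · have hgap : Nat.count (fun k => (w (t + 1 + k)).1 = x) (Nat.find hret - 1) = 0 :=
        Nat.count_iff_forall_not.2 fun k hk hxk =>
          Nat.find_min hret (m := 1 + k) (by omega) ⟨by omega, by rwa [← add_assoc]⟩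
      rw [show t + Nat.find hret = t + 1 + (Nat.find hret - 1) by omega, Nat.count_add, hgap,
        Nat.count_succ, if_pos hx, hc]
    · rcases le_or_gt l t with hlt | hlt
      · exact hB l hlt
      · simpa [Nat.add_sub_cancel' hlt.le] using hBn (l - t) ⟨by omega, by omega⟩

lemma visitAvoiding_succ (x : E) (B : Set E) (m : ℕ) :
    visitAvoiding J S x B (m + 1) =
      ⋃ t, {ω | IsVisitAvoiding x B m t (traj J S ω)} ∩
        ⋃ s, shiftedEvent J S (ReturnsAvoiding x B s) t := by
  ext ω
  simpa only [visitAvoiding, shiftedEvent, Set.mem_iUnion, Set.mem_inter_iff,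
    Set.mem_ofPred_eq] using exists_isVisitAvoiding_succ_iff

lemma pairwise_disjoint_isVisitAvoiding (x : E) (B : Set E) (m : ℕ) :
    Pairwise (Disjoint on fun t => {ω | IsVisitAvoiding x B m t (traj J S ω)}) :=
  fun _ _ hne => Set.disjoint_left.2 fun _ hω hω' => hne (hω.1.eq_of_eq hω'.1)

lemma exists_isVisit_zero_iff {x : E} {w : ℕ → E × ℕ} :
    (∃ t, IsVisit x 0 t w) ↔ ∃ t, (w t).1 = x := by
  refine ⟨fun ⟨t, ht⟩ => ⟨t, ht.1⟩, fun hx => ⟨Nat.find hx, Nat.find_spec hx, ?_⟩⟩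
  exact Nat.count_iff_forall_not.2 fun l hl => Nat.find_min hx hl

lemma iInter_visitAvoiding_subset (x : E) (B : Set E) :
    ⋂ m, visitAvoiding J S x B m ⊆ {ω | ∀ n, J n ω ∉ B} := fun ω hω n => by
  obtain ⟨t, hv, hB⟩ := Set.mem_iUnion.1 (Set.mem_iInter.1 hω n)
  exact hB n hv.le

lemma compl_visitAvoiding_zero_subset (x y : E) (m : ℕ) :
    (visitAvoiding J S x ∅ 0)ᶜ ⊆ visitAvoiding J S y {x} m ∪ (visitAvoiding J S y ∅ m)ᶜ := by
  intro ω hω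
  refine (em (ω ∈ visitAvoiding J S y ∅ m)).imp (fun hv => ?_) id
  obtain ⟨t, hv⟩ := Set.mem_iUnion.1 hv
  refine Set.mem_iUnion.2 ⟨t, isVisitAvoiding_empty.1 hv, fun l _ hl => hω ?_⟩
  simpa only [visitAvoiding, isVisitAvoiding_empty, Set.mem_iUnion, Set.mem_ofPred_eq] using
    exists_isVisit_zero_iff.2 ⟨l, hl⟩

namespace IsMarkovRenewalChain

variable [MeasurableSpace Ω] {P : E → Measure Ω} {q : E → E → ℕ → ℝ}

lemma measure_visitAvoiding_zero_self (h : IsMarkovRenewalChain P J S q) {x : E} {B : Set E}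
    (hx : x ∉ B) : P x (visitAvoiding J S x B 0) = 1 := by
  have := h.isProbabilityMeasure x
  refine le_antisymm prob_le_one (h.measure_J_zero x ▸ measure_mono fun ω hω =>
    Set.mem_iUnion.2 ⟨0, ⟨hω, Nat.count_zero _⟩, fun l hl => ?_⟩)
  have hJ0 : J 0 ω = x := hω
  simpa [Nat.le_zero.1 hl, traj, hJ0] using hx

variable [Countable E]

lemma measurableSet_visitAvoiding (h : IsMarkovRenewalChain P J S q) (x : E) (B : Set E)
    (m : ℕ) : MeasurableSet (visitAvoiding J S x B m) :=
  .iUnion fun t => h.measurableSet_setOf_traj (dependsOn_isVisitAvoiding x B m t)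

/-- Regeneration at the `m`-th visit to `x`. -/
lemma measure_visitAvoiding_succ (h : IsMarkovRenewalChain P J S q) (y x : E) (B : Set E)
    (m : ℕ) :
    P y (visitAvoiding J S x B (m + 1)) =
      P y (visitAvoiding J S x B m) * P x (returnAvoiding J S x B) := by
  have hmeas := fun t => h.measurableSet_setOf_traj (dependsOn_isVisitAvoiding x B m t)
  have hdisj := pairwise_disjoint_isVisitAvoiding (J := J) (S := S) x B m
  rw [visitAvoiding_succ, measure_iUnion (fun t t' hne => (hdisj hne).mono Set.inter_subset_left
      Set.inter_subset_left) fun t => (hmeas t).inter (.iUnion fun s =>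
        h.measurableSet_shiftedEvent (dependsOn_returnsAvoiding x B s) t),
    visitAvoiding, measure_iUnion hdisj hmeas, ← ENNReal.tsum_mul_right]
  exact tsum_congr fun t => h.measure_inter_iUnion_shiftedEvent y
    (dependsOn_isVisitAvoiding x B m t) (fun w hw => hw.1.1) (dependsOn_returnsAvoiding x B)
    fun s w ⟨n, hn, hx, hB⟩ => ⟨n, ⟨hn.1, hn.2.trans s.le_succ⟩, hx, hB⟩

lemma measure_visitAvoiding (h : IsMarkovRenewalChain P J S q) (y x : E) (B : Set E) (m : ℕ) :
    P y (visitAvoiding J S x B m) =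
      P y (visitAvoiding J S x B 0) * P x (returnAvoiding J S x B) ^ m := by
  induction m with
  | zero => rw [pow_zero, mul_one]
  | succ m ih => rw [h.measure_visitAvoiding_succ, ih, pow_succ, mul_assoc]

lemma measure_visit_eq_visit_zero (h : IsMarkovRenewalChain P J S q) {x : E}
    (hrec : ∀ᵐ ω ∂(P x), ∃ n, 1 ≤ n ∧ J n ω = x) (y : E) (m : ℕ) :
    P y (visitAvoiding J S x ∅ m) = P y (visitAvoiding J S x ∅ 0) := by
  have := h.isProbabilityMeasure x
  have hret : P x (returnAvoiding J S x ∅) = 1 := by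
    rw [← prob_compl_eq_zero_iff (h.measurableSet_returnAvoiding x ∅), returnAvoiding_empty]
    exact ae_iff.1 hrec
  rw [h.measure_visitAvoiding, hret, one_pow, mul_one]

lemma measure_returnAvoiding_lt_one (h : IsMarkovRenewalChain P J S q) {y x : E} (hyx : y ≠ x)
    (hirr : 0 < P y {ω | ∃ n, 1 ≤ n ∧ J n ω = x}) : P y (returnAvoiding J S y {x}) < 1 := by
  have := h.isProbabilityMeasure y
  refine lt_of_le_of_ne prob_le_one fun hr => hirr.ne' (measure_mono_null ?_ (μ := P y)
    (t := (⋂ m, visitAvoiding J S y {x} m)ᶜ) ?_)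
  · exact fun ω ⟨n, _, hn⟩ hω => iInter_visitAvoiding_subset y {x} hω n hn
  · rw [Set.compl_iInter]
    refine measure_iUnion_null fun m => (prob_compl_eq_zero_iff
      (h.measurableSet_visitAvoiding y {x} m)).2 ?_
    rw [h.measure_visitAvoiding, h.measure_visitAvoiding_zero_self (B := {x}) hyx, hr, one_pow,
      one_mul]

/-- For `y ≠ x`, a path from `y` that never visits `x` avoids it during its first `m` excursions
from `y`, which has probability at most `r ^ m`, where `r < 1` (by irreducibility) is the
probability of returning to `y` before visiting `x`. -/
theorem measure_visit_eq_one (h : IsMarkovRenewalChain P J S q)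
    (hrec : ∀ i, ∀ᵐ ω ∂(P i), ∃ n, 1 ≤ n ∧ J n ω = i)
    (hirr : ∀ i j, 0 < P i {ω | ∃ n, 1 ≤ n ∧ J n ω = j}) (y x : E) (m : ℕ) :
    P y (visitAvoiding J S x ∅ m) = 1 := by
  have := h.isProbabilityMeasure y
  rw [h.measure_visit_eq_visit_zero (hrec x)]
  obtain rfl | hyx := eq_or_ne y x
  · exact h.measure_visitAvoiding_zero_self (Set.notMem_empty y)
  have hvisit_y : ∀ m, P y (visitAvoiding J S y ∅ m) = 1 := fun m => by
    rw [h.measure_visit_eq_visit_zero (hrec y), h.measure_visitAvoiding_zero_self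
      (Set.notMem_empty y)]
  have hbound : ∀ m, P y (visitAvoiding J S x ∅ 0)ᶜ ≤ P y (returnAvoiding J S y {x}) ^ m :=
    fun m => calc
      _ ≤ P y (visitAvoiding J S y {x} m) + P y (visitAvoiding J S y ∅ m)ᶜ :=
        (measure_mono (compl_visitAvoiding_zero_subset x y m)).trans (measure_union_le _ _)
      _ ≤ P y (returnAvoiding J S y {x}) ^ m := by
        rw [(prob_compl_eq_zero_iff (h.measurableSet_visitAvoiding y ∅ m)).2 (hvisit_y m),
          add_zero, h.measure_visitAvoiding]
        exact mul_le_of_le_one_left' prob_le_one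
  rw [← prob_compl_eq_zero_iff (h.measurableSet_visitAvoiding x ∅ 0)]
  exact le_antisymm (ge_of_tendsto' (ENNReal.tendsto_pow_atTop_nhds_zero_of_lt_one
    (h.measure_returnAvoiding_lt_one hyx (hirr y x))) hbound) bot_le

end IsMarkovRenewalChain

end Visits

section Sampling

variable {E Ω : Type} [DecidableEq E] {J : ℕ → Ω → E} {S : ℕ → Ω → ℕ}

def stepAfterVisit (J : ℕ → Ω → E) (S : ℕ → Ω → ℕ) (i : E) (e : E × ℕ) (m : ℕ) : Set Ω :=
  ⋃ t, {ω | IsVisit i m t (traj J S ω)} ∩ {ω | traj J S ω (t + 1) = e}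

lemma iUnion_setOf_isVisit (i : E) (m : ℕ) :
    ⋃ t, {ω | IsVisit i m t (traj J S ω)} = visitAvoiding J S i ∅ m := by
  simp only [visitAvoiding, isVisitAvoiding_empty]

namespace IsMarkovRenewalChain

variable [MeasurableSpace Ω] [Countable E] {P : E → Measure Ω} {q : E → E → ℕ → ℝ}

lemma measurableSet_stepAfterVisit (h : IsMarkovRenewalChain P J S q) (i : E) (e : E × ℕ)
    (m : ℕ) : MeasurableSet (stepAfterVisit J S i e m) :=
  .iUnion fun t => (h.measurableSet_setOf_traj (dependsOn_isVisit i m t)).inter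
    (h.measurableSet_traj_eq _ e)

lemma measure_stepAfterVisit (h : IsMarkovRenewalChain P J S q) {x i : E} {m : ℕ}
    (hvisit : P x (visitAvoiding J S i ∅ m) = 1) (e : E × ℕ) :
    P x (stepAfterVisit J S i e m) = ENNReal.ofReal (q i e.1 e.2) := by
  rw [stepAfterVisit, h.measure_iUnion_inter_traj_succ x (dependsOn_isVisit i m)
    (fun t w hw => hw.1) (fun t t' hne => Set.disjoint_left.2 fun ω hω hω' =>
      hne (hω.eq_of_eq hω')), iUnion_setOf_isVisit, hvisit, mul_one]

/-- The step after the `m'`-th visit is independent of the past, which contains the step after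
the `m`-th visit. -/
lemma measure_stepAfterVisit_inter (h : IsMarkovRenewalChain P J S q) {x i : E} {m m' : ℕ}
    (hm : m < m') (hvisit : ∀ m, P x (visitAvoiding J S i ∅ m) = 1) (e : E × ℕ) :
    P x (stepAfterVisit J S i e m ∩ stepAfterVisit J S i e m') =
      ENNReal.ofReal (q i e.1 e.2) * ENNReal.ofReal (q i e.1 e.2) := by
  let Ψ : ℕ → (ℕ → E × ℕ) → Prop := fun t' w =>
    (∃ t, IsVisit i m t w ∧ w (t + 1) = e) ∧ IsVisit i m' t' w
  have hΨ : ∀ t', {ω | Ψ t' (traj J S ω)} =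
      stepAfterVisit J S i e m ∩ {ω | IsVisit i m' t' (traj J S ω)} := fun t' => by
    ext ω
    simp [Ψ, stepAfterVisit]
  have hdep : ∀ t', DependsOn (Ψ t') (Set.Iic t') := by
    rintro t' w w' hw
    refine propext ⟨fun ⟨⟨t, hv, he⟩, hv'⟩ => ?_, fun ⟨⟨t, hv, he⟩, hv'⟩ => ?_⟩
    all_goals
      have htt' := hv.lt_of_lt hv' hm
      have hw' : ∀ l ∈ Set.Iic t, w l = w' l := fun l hl => hw l (hl.trans htt'.le)
      have he' := hw (t + 1) (Set.mem_Iic.2 htt')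
    · exact ⟨⟨t, dependsOn_isVisit i m t hw' ▸ hv, he' ▸ he⟩, dependsOn_isVisit i m' t' hw ▸ hv'⟩
    · exact ⟨⟨t, dependsOn_isVisit i m t hw' ▸ hv, he' ▸ he⟩, dependsOn_isVisit i m' t' hw ▸ hv'⟩
  have hinter : stepAfterVisit J S i e m ∩ stepAfterVisit J S i e m' =
      ⋃ t', {ω | Ψ t' (traj J S ω)} ∩ {ω | traj J S ω (t' + 1) = e} := by
    simp only [hΨ, stepAfterVisit, Set.inter_iUnion, Set.inter_assoc]
  have := h.isProbabilityMeasure x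
  have hvisit' : P x (visitAvoiding J S i ∅ m')ᶜ = 0 :=
    (prob_compl_eq_zero_iff (h.measurableSet_visitAvoiding i ∅ m')).2 (hvisit m')
  rw [hinter, h.measure_iUnion_inter_traj_succ x hdep (fun t' w hw => hw.2.1)
      (fun t t' hne => Set.disjoint_left.2 fun ω hω hω' => hne (hω.2.eq_of_eq hω'.2)) e]
  simp only [hΨ, ← Set.inter_iUnion, iUnion_setOf_isVisit, measure_inter_conull hvisit',
    h.measure_stepAfterVisit (hvisit m) e]

/-- Only pairwise independence is available, which is what Etemadi's strong law needs. -/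
theorem ae_tendsto_average_stepAfterVisit (h : IsMarkovRenewalChain P J S q) {x i : E}
    (hvisit : ∀ m, P x (visitAvoiding J S i ∅ m) = 1) (e : E × ℕ) (hq : 0 ≤ q i e.1 e.2) :
    ∀ᵐ ω ∂(P x), Tendsto (fun n : ℕ =>
      (∑ m ∈ range n, (stepAfterVisit J S i e m).indicator (1 : Ω → ℝ) ω) / n) atTop
        (𝓝 (q i e.1 e.2)) := by
  have := h.isProbabilityMeasure x
  have hmeas := h.measurableSet_stepAfterVisit i e
  have hmeasure := fun m => h.measure_stepAfterVisit (hvisit m) e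
  have hlaw := strong_law_ae_real (μ := P x)
    (fun m => (stepAfterVisit J S i e m).indicator (1 : Ω → ℝ))
    ((integrable_const (1 : ℝ)).indicator (hmeas 0))
    (fun m m' hne => ((indepSet_iff_measure_inter_eq_mul (hmeas m) (hmeas m') _).2 (by
      rw [hmeasure, hmeasure]
      rcases hne.lt_or_gt with hlt | hlt
      · exact h.measure_stepAfterVisit_inter hlt hvisit e
      · rw [Set.inter_comm]
        exact h.measure_stepAfterVisit_inter hlt hvisit e)).indepFun_indicator_one)
    fun m => identDistrib_indicator_one (hmeas m) (hmeas 0) (by rw [hmeasure, hmeasure])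
  rwa [integral_indicator_one (hmeas 0), measureReal_def, hmeasure,
    ENNReal.toReal_ofReal hq] at hlaw

end IsMarkovRenewalChain

end Sampling

section Estimator

variable {E Ω : Type} [DecidableEq E] {J : ℕ → Ω → E} {S : ℕ → Ω → ℕ}

lemma strictMono_of_Xproc_ne_zero {ω : Ω} (hX : ∀ t, Xproc S (t + 1) ω ≠ 0) :
    StrictMono fun n => S n ω :=
  strictMono_nat_of_lt_succ fun n => by
    have := hX n
    simp only [Xproc, Nat.add_sub_cancel] at this
    omega

lemma Nvis_eq_count (i : E) (M : ℕ) (ω : Ω) :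
    Nvis J S i M ω = Nat.count (fun t => J t ω = i) (Ncnt S M ω) := by
  rw [Nvis, sum_Icc_one_eq_sum_range, Nat.count_eq_card_filter_range, card_filter]
  simp

lemma mem_stepAfterVisit_count_iff {i : E} {e : E × ℕ} {t : ℕ} {ω : Ω} (hJ : J t ω = i) :
    ω ∈ stepAfterVisit J S i e (Nat.count (fun l => J l ω = i) t) ↔ traj J S ω (t + 1) = e := by
  have hv : IsVisit i (Nat.count (fun l => J l ω = i) t) t (traj J S ω) := ⟨hJ, rfl⟩
  simp only [stepAfterVisit, Set.mem_iUnion, Set.mem_inter_iff, Set.mem_ofPred_eq]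
  exact ⟨fun ⟨t', hv', he⟩ => hv'.eq_of_eq hv ▸ he, fun he => ⟨t, hv, he⟩⟩

lemma qhat_eq_average (M : ℕ) (ω : Ω) (i j : E) (k : ℕ) :
    qhat J S M ω i j k = (∑ m ∈ range (Nvis J S i M ω),
      (stepAfterVisit J S i (j, k) m).indicator (1 : Ω → ℝ) ω) / Nvis J S i M ω := by
  classical
  rw [qhat, Nvis_eq_count, ← Nat.sum_range_ite_count, sum_Icc_one_eq_sum_range]
  congr 1
  refine sum_congr rfl fun t _ => ?_
  by_cases hJ : J t ω = i
  · rw [Set.indicator_apply, mem_stepAfterVisit_count_iff hJ]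
    simp [hJ, traj, Prod.ext_iff]
  · simp [hJ]

end Estimator

section

variable {E : Type} [Fintype E] [DecidableEq E] {Ω : Type} [MeasurableSpace Ω]

/-- Strong consistency of the empirical estimator of the semi-Markov kernel
(Barbu–Limnios, Theorem 4.1). -/
theorem statement0 (q : E → E → ℕ → ℝ) (P : E → Measure Ω) (J : ℕ → Ω → E) (S : ℕ → Ω → ℕ)
    (hq : IsSemiMarkovKernel q) (hchain : IsMarkovRenewalChain P J S q)
    (hA : AssumptionA P J S) (i₀ : E) :
    ∀ᵐ ω ∂(P i₀), ∀ (i j : E) (k : ℕ),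
      Tendsto (fun M : ℕ => qhat J S M ω i j k) atTop (𝓝 (q i j k)) := by
  obtain ⟨hq_nonneg, hq0, -⟩ := hq
  have := hchain.isProbabilityMeasure i₀
  have hvisit := hchain.measure_visit_eq_one (fun i => (hA.2.2 i).1) hA.1 i₀
  have hvisit_ae : ∀ᵐ ω ∂(P i₀), ∀ i m, ω ∈ visitAvoiding J S i ∅ m :=
    ae_all_iff.2 fun i => ae_all_iff.2 fun m =>
      (mem_ae_iff_prob_eq_one (hchain.measurableSet_visitAvoiding i ∅ m)).2 (hvisit i m)
  have hlln := ae_all_iff.2 fun e : E × E × ℕ =>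
    hchain.ae_tendsto_average_stepAfterVisit (hvisit e.1) (e.2.1, e.2.2) (hq_nonneg _ _ _)
  filter_upwards [hchain.ae_Xproc_succ_ne_zero hq0 i₀, hvisit_ae, hlln] with ω hX hvis hlim i j k
  have hN : Tendsto (fun M => Nvis J S i M ω) atTop atTop := by
    simp only [Nvis_eq_count]
    refine (Nat.tendsto_count_atTop fun m => ?_).comp
      (strictMono_of_Xproc_ne_zero hX).tendsto_sSup_le_atTop
    obtain ⟨t, hv⟩ := Set.mem_iUnion.1 (hvis i m)
    exact ⟨t, hv.1⟩
  simpa only [qhat_eq_average, Function.comp_def] using (hlim (i, j, k)).comp hN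

end

end SMCPaper
end
end

section
/- Under assumption (A), the estimator ψ̂(M) := (δI − q̂(M))^{(−1)} of the matrix convolution inverse ψ := (δI − q)^{(−1)} is strongly consistent: for every initial state i₀ ∈ E, almost surely under P_{i₀}, ψ̂_{ij}(k,M) → ψ_{ij}(k) as M → ∞ for every (i,j,k) ∈ Ẽ. -/
open MeasureTheory Filter Topology Finset ProbabilityTheory

noncomputable section

/-!
Since `q̂(M)(0) = q(0) = 0`, the `n`-fold convolution powers vanish at times `k < n`, so `ψ̂(M)(k)`
and `ψ(k)` are the same polynomial in the finitely many entries `q̂(M)(l)`, resp. `q(l)`, `l ≤ k`.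
It therefore suffices that `q̂_{ij}(k, M) → q_{ij}(k)` almost surely.

Let `ξ_m` be the indicator that the jump ending the `(m + 1)`-st visit of `J` to `i` goes to `j`
after a sojourn of length `k`; then `q̂_{ij}(k, M)` is the average of `ξ_0, …, ξ_{N_i(M) - 1}`.
The Markov property at the (random) ends of visits shows that the `ξ_m` are Bernoulli with
parameter `q_{ij}(k)` and pairwise independent, so Etemadi's strong law of large numbers applies.
Finally `N_i(M) → ∞`: sojourn times are positive, so `N(M) → ∞`, and on a finite irreducible state
space there are a window length `m` and `c < 1` such that `J` avoids `i` during `R` consecutive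
windows with probability at most `c ^ R`, so `J` visits `i` infinitely often.
-/

namespace SMCPaper

section ConvolutionInverse

variable {E : Type} [Fintype E] [DecidableEq E]

lemma mpow_apply_eq_zero_of_lt {A : E → E → ℕ → ℝ} (hA : ∀ i j, A i j 0 = 0) {n k : ℕ}
    (hk : k < n) (i j : E) : mpow A n i j k = 0 := by
  induction n generalizing i j k with
  | zero => omega
  | succ n ih =>
    simp only [mpow, mconv]
    refine sum_eq_zero fun l hlk => sum_eq_zero fun u _ => ?_
    rcases Nat.eq_zero_or_pos l with rfl | hl
    · rw [hA, zero_mul]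
    · rw [ih (by rw [mem_range] at hlk; omega), mul_zero]

lemma psiOf_apply_eq_sum_range {A : E → E → ℕ → ℝ} (hA : ∀ i j, A i j 0 = 0) (i j : E) (k : ℕ) :
    psiOf A i j k = ∑ n ∈ range (k + 1), mpow A n i j k :=
  tsum_eq_sum fun _ hn => mpow_apply_eq_zero_of_lt hA (by simpa using hn) i j

variable {α : Type*} {l : Filter α} {A : α → E → E → ℕ → ℝ} {B : E → E → ℕ → ℝ}

lemma tendsto_mpow_apply (h : ∀ i j k, Tendsto (fun a => A a i j k) l (𝓝 (B i j k))) (n : ℕ) :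
    ∀ i j k, Tendsto (fun a => mpow (A a) n i j k) l (𝓝 (mpow B n i j k)) := by
  induction n with
  | zero => exact fun _ _ _ => tendsto_const_nhds
  | succ n ih =>
    simp only [mpow, mconv]
    exact fun i j k => tendsto_finsetSum _ fun l _ => tendsto_finsetSum _ fun u _ =>
      (h i u l).mul (ih u j (k - l))

lemma tendsto_psiOf_apply (h : ∀ i j k, Tendsto (fun a => A a i j k) l (𝓝 (B i j k)))
    (hA : ∀ a i j, A a i j 0 = 0) (hB : ∀ i j, B i j 0 = 0) (i j : E) (k : ℕ) :
    Tendsto (fun a => psiOf (A a) i j k) l (𝓝 (psiOf B i j k)) := by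
  simp only [psiOf_apply_eq_sum_range (hA _), psiOf_apply_eq_sum_range hB]
  exact tendsto_finsetSum _ fun n _ => tendsto_mpow_apply h n i j k

end ConvolutionInverse

lemma measure_eq_tsum_inter_fiber {Ω ι : Type*} [MeasurableSpace Ω] [Countable ι]
    (μ : Measure Ω) (f : Ω → ι) {B : Set Ω} (hB : ∀ b, MeasurableSet (B ∩ {ω | f ω = b})) :
    μ B = ∑' b, μ (B ∩ {ω | f ω = b}) := by
  rw [← measure_iUnion
    (fun b b' h => Set.disjoint_left.2 fun ω hb hb' => h (hb.2.symm.trans hb'.2)) hB,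
    ← Set.inter_iUnion, Set.iUnion_eq_univ_iff.2 fun ω => ⟨f ω, rfl⟩, Set.inter_univ]

lemma measure_inter_eq_tsum_inter_fiber {Ω ι : Type*} [MeasurableSpace Ω] [Countable ι]
    (μ : Measure Ω) (f : Ω → ι) {A B : Set Ω} (hA : ∀ b, MeasurableSet (A ∩ {ω | f ω = b}))
    (hB : MeasurableSet B) : μ (A ∩ B) = ∑' b, μ ((A ∩ {ω | f ω = b}) ∩ B) := by
  rw [measure_eq_tsum_inter_fiber μ f fun b => by rw [Set.inter_right_comm]; exact (hA b).inter hB]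
  simp only [Set.inter_right_comm]

section PathEvents

variable {E Ω : Type}

def pathPrefix (J : ℕ → Ω → E) (S : ℕ → Ω → ℕ) (t : ℕ) (ω : Ω) : Fin t → E × ℕ :=
  fun l => (J l ω, Xproc S l ω)

def IsDeterminedBefore (J : ℕ → Ω → E) (S : ℕ → Ω → ℕ) (t : ℕ) (A : Set Ω) : Prop :=
  ∀ ω ω', pathPrefix J S t ω = pathPrefix J S t ω' → ω ∈ A → ω' ∈ A

variable {J : ℕ → Ω → E} {S : ℕ → Ω → ℕ} {t : ℕ} {A : Set Ω}

lemma pathPrefix_eq_iff {ω ω' : Ω} : pathPrefix J S t ω = pathPrefix J S t ω' ↔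
    ∀ l < t, J l ω = J l ω' ∧ Xproc S l ω = Xproc S l ω' := by
  simp [pathPrefix, funext_iff, Fin.forall_iff, Prod.ext_iff]

lemma IsDeterminedBefore.mono {s : ℕ} (hA : IsDeterminedBefore J S s A) (hst : s ≤ t) :
    IsDeterminedBefore J S t A := fun ω ω' h =>
  hA ω ω' (pathPrefix_eq_iff.2 fun l hl => pathPrefix_eq_iff.1 h l (by omega))

lemma IsDeterminedBefore.inter {B : Set Ω} (hA : IsDeterminedBefore J S t A)
    (hB : IsDeterminedBefore J S t B) : IsDeterminedBefore J S t (A ∩ B) :=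
  fun ω ω' h hω => ⟨hA ω ω' h hω.1, hB ω ω' h hω.2⟩

lemma isDeterminedBefore_J_eq {n : ℕ} (hn : n < t) (z : E) :
    IsDeterminedBefore J S t {ω | J n ω = z} := fun ω ω' h hω => by
  rwa [Set.mem_ofPred_eq, ← (pathPrefix_eq_iff.1 h n hn).1]

lemma isDeterminedBefore_jump_eq {n : ℕ} (hn : n < t) (z : E) (b : ℕ) :
    IsDeterminedBefore J S t {ω | J n ω = z ∧ Xproc S n ω = b} := fun ω ω' h hω => by
  obtain ⟨hJ, hX⟩ := pathPrefix_eq_iff.1 h n hn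
  rwa [Set.mem_ofPred_eq, ← hJ, ← hX]

variable {i : E} {m : ℕ}

def avoidSet (J : ℕ → Ω → E) (i : E) (t m : ℕ) : Set Ω :=
  {ω | ∀ l, t ≤ l → l < t + m → J l ω ≠ i}

lemma avoidSet_zero : avoidSet J i t 0 = Set.univ := by
  ext ω; simp only [avoidSet, Set.mem_ofPred_eq, Set.mem_univ, iff_true]; omega

lemma avoidSet_succ : avoidSet J i t (m + 1) = {ω | J t ω ≠ i} ∩ avoidSet J i (t + 1) m := by
  ext ω
  simp only [avoidSet, Set.mem_inter_iff, Set.mem_ofPred_eq]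
  refine ⟨fun h => ⟨h t le_rfl (by omega), fun l h1 h2 => h l (by omega) (by omega)⟩,
    fun ⟨h0, h⟩ l h1 h2 => ?_⟩
  rcases h1.eq_or_lt with rfl | h1
  · exact h0
  · exact h l h1 (by omega)

lemma avoidSet_add {m' : ℕ} :
    avoidSet J i t (m + m') = avoidSet J i t m ∩ avoidSet J i (t + m) m' := by
  ext ω
  simp only [avoidSet, Set.mem_inter_iff, Set.mem_ofPred_eq]
  refine ⟨fun h => ⟨fun l h1 h2 => h l h1 (by omega), fun l h1 h2 => h l (by omega) (by omega)⟩,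
    fun ⟨h, h'⟩ l h1 h2 => ?_⟩
  rcases lt_or_ge l (t + m) with hl | hl
  · exact h l h1 hl
  · exact h' l hl (by omega)

lemma isDeterminedBefore_avoidSet {t' : ℕ} (h : t + m ≤ t') :
    IsDeterminedBefore J S t' (avoidSet J i t m) := fun ω ω' hω hA l h1 h2 => by
  rw [← (pathPrefix_eq_iff.1 hω l (by omega)).1]; exact hA l h1 h2

end PathEvents

section Measurability

variable {E Ω : Type} [MeasurableSpace Ω] {J : ℕ → Ω → E} {S : ℕ → Ω → ℕ}

lemma measurableSet_Xproc_eq (hS : ∀ n b, MeasurableSet {ω | S n ω = b}) (n b : ℕ) :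
    MeasurableSet {ω | Xproc S n ω = b} := by
  have : {ω | Xproc S n ω = b} =
      ⋃ p : ℕ × ℕ, ⋃ (_ : p.1 - p.2 = b), {ω | S n ω = p.1} ∩ {ω | S (n - 1) ω = p.2} := by
    ext ω
    simp only [Xproc, Set.mem_ofPred_eq, Set.mem_iUnion, Set.mem_inter_iff]
    exact ⟨fun h => ⟨(S n ω, S (n - 1) ω), h, rfl, rfl⟩, by rintro ⟨p, rfl, h1, h2⟩; rw [h1, h2]⟩
  rw [this]
  exact .iUnion fun p => .iUnion fun _ => (hS n p.1).inter (hS _ p.2)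

lemma measurableSet_jump_eq (hJ : ∀ n z, MeasurableSet {ω | J n ω = z})
    (hS : ∀ n b, MeasurableSet {ω | S n ω = b}) (n : ℕ) (z : E) (b : ℕ) :
    MeasurableSet {ω | J n ω = z ∧ Xproc S n ω = b} :=
  (hJ n z).inter (measurableSet_Xproc_eq hS n b)

lemma measurableSet_pathPrefix_eq (hJ : ∀ n z, MeasurableSet {ω | J n ω = z})
    (hS : ∀ n b, MeasurableSet {ω | S n ω = b}) {t : ℕ} (g : Fin t → E × ℕ) :
    MeasurableSet {ω | pathPrefix J S t ω = g} := by
  have : {ω | pathPrefix J S t ω = g} =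
      ⋂ l : Fin t, {ω | J l ω = (g l).1 ∧ Xproc S l ω = (g l).2} := by
    ext ω
    simp [pathPrefix, funext_iff, Prod.ext_iff]
  rw [this]
  exact .iInter fun l => measurableSet_jump_eq hJ hS l _ _

lemma IsDeterminedBefore.measurableSet [Countable E] (hJ : ∀ n z, MeasurableSet {ω | J n ω = z})
    (hS : ∀ n b, MeasurableSet {ω | S n ω = b}) {t : ℕ} {A : Set Ω}
    (hA : IsDeterminedBefore J S t A) : MeasurableSet A := by
  have : A = ⋃ g ∈ pathPrefix J S t '' A, {ω | pathPrefix J S t ω = g} := by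
    ext ω
    simp only [Set.mem_iUnion, Set.mem_image, Set.mem_ofPred_eq]
    exact ⟨fun h => ⟨_, ⟨ω, h, rfl⟩, rfl⟩, fun ⟨_, ⟨ω', h', hω'⟩, hω⟩ =>
      hA ω' ω (hω'.trans hω.symm) h'⟩
  rw [this]
  exact .biUnion (Set.to_countable _) fun g _ => measurableSet_pathPrefix_eq hJ hS g

lemma measurableSet_avoidSet (hJ : ∀ n z, MeasurableSet {ω | J n ω = z}) (i : E) (t m : ℕ) :
    MeasurableSet (avoidSet J i t m) := by
  simp only [avoidSet, Set.ofPred_forall]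
  exact .iInter fun l => .iInter fun _ => .iInter fun _ => (hJ l i).compl

end Measurability

section MarkovProperty

variable {E Ω : Type} [MeasurableSpace Ω] {q : E → E → ℕ → ℝ} {P : E → Measure Ω}
  {J : ℕ → Ω → E} {S : ℕ → Ω → ℕ}

lemma measure_pathPrefix_eq_inter_jump (hchain : IsMarkovRenewalChain P J S q) (y : E) {t : ℕ}
    (g : Fin (t + 1) → E × ℕ) (j : E) (k : ℕ) :
    P y ({ω | pathPrefix J S (t + 1) ω = g} ∩ {ω | J (t + 1) ω = j ∧ Xproc S (t + 1) ω = k}) =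
      ENNReal.ofReal (q (g (Fin.last t)).1 j k) * P y {ω | pathPrefix J S (t + 1) ω = g} := by
  let js : ℕ → E := fun l => if h : l < t + 1 then (g ⟨l, h⟩).1 else j
  let xs : ℕ → ℕ := fun l => if h : l < t + 1 then (g ⟨l, h⟩).2 else k
  have hprefix : {ω | ∀ l ≤ t, J l ω = js l ∧ Xproc S l ω = xs l} =
      {ω | pathPrefix J S (t + 1) ω = g} := by
    ext ω
    simp only [Set.mem_ofPred_eq, pathPrefix, funext_iff,
      Prod.ext_iff, Fin.forall_iff, Nat.lt_succ_iff]
    refine forall₂_congr fun l hl => ?_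
    simp only [js, xs, dif_pos (Nat.lt_succ_of_le hl)]
  have := hchain.2.2.2.2 y t js xs
  simp only [hprefix, js, xs, dif_pos (Nat.lt_succ_self t), lt_irrefl, dif_neg, not_false_eq_true]
    at this
  rw [Set.inter_comm, this]
  rfl

lemma measure_inter_jump [Countable E] (hchain : IsMarkovRenewalChain P J S q) (y : E)
    {t : ℕ} {x : E} {A : Set Ω} (hA : IsDeterminedBefore J S (t + 1) A) (hx : ∀ ω ∈ A, J t ω = x)
    (j : E) (k : ℕ) :
    P y (A ∩ {ω | J (t + 1) ω = j ∧ Xproc S (t + 1) ω = k}) = ENNReal.ofReal (q x j k) * P y A := by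
  have hAm := fun g : Fin (t + 1) → E × ℕ => (hA.measurableSet hchain.2.1 hchain.2.2.1).inter
    (measurableSet_pathPrefix_eq hchain.2.1 hchain.2.2.1 g)
  have hpiece : ∀ g, P y ((A ∩ {ω | pathPrefix J S (t + 1) ω = g}) ∩
      {ω | J (t + 1) ω = j ∧ Xproc S (t + 1) ω = k}) =
      ENNReal.ofReal (q x j k) * P y (A ∩ {ω | pathPrefix J S (t + 1) ω = g}) := by
    intro g
    rcases (A ∩ {ω | pathPrefix J S (t + 1) ω = g}).eq_empty_or_nonempty with h | ⟨ω, hωA, hωg⟩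
    · simp [h]
    have hsub : {ω | pathPrefix J S (t + 1) ω = g} ⊆ A :=
      fun ω' hω' => hA ω ω' (hωg.trans (Eq.symm hω')) hωA
    have hgx : (g (Fin.last t)).1 = x := by
      rw [← hx ω hωA, ← (hωg : pathPrefix J S (t + 1) ω = g)]; rfl
    rw [Set.inter_eq_right.2 hsub, measure_pathPrefix_eq_inter_jump hchain, hgx]
  rw [measure_inter_eq_tsum_inter_fiber _ (pathPrefix J S (t + 1)) hAm
      (measurableSet_jump_eq hchain.2.1 hchain.2.2.1 _ _ _),
    tsum_congr hpiece, ENNReal.tsum_mul_left, ← measure_eq_tsum_inter_fiber _ _ hAm]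

lemma measure_inter_jump_at [Countable E] (hchain : IsMarkovRenewalChain P J S q) (y : E)
    {T : Ω → ℕ} {x : E} {A : Set Ω} (hAm : MeasurableSet A) (hT : ∀ t, MeasurableSet {ω | T ω = t})
    (hT0 : P y {ω | T ω = 0} = 0)
    (hA : ∀ t, IsDeterminedBefore J S (t + 1) (A ∩ {ω | T ω = t + 1}))
    (hx : ∀ ω t, T ω = t + 1 → J t ω = x) (j : E) (k : ℕ) :
    P y (A ∩ {ω | J (T ω) ω = j ∧ Xproc S (T ω) ω = k}) = ENNReal.ofReal (q x j k) * P y A := by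
  have hjump := measurableSet_jump_eq hchain.2.1 hchain.2.2.1
  have hpiece : ∀ t, P y ((A ∩ {ω | T ω = t}) ∩ {ω | J t ω = j ∧ Xproc S t ω = k}) =
      ENNReal.ofReal (q x j k) * P y (A ∩ {ω | T ω = t}) := by
    rintro (_ | t)
    · rw [measure_mono_null (Set.inter_subset_left.trans Set.inter_subset_right) hT0,
        measure_mono_null Set.inter_subset_right hT0, mul_zero]
    · exact measure_inter_jump hchain y (hA t) (fun ω hω => hx ω t hω.2) j k
  have hset : ∀ t, (A ∩ {ω | J (T ω) ω = j ∧ Xproc S (T ω) ω = k}) ∩ {ω | T ω = t} =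
      (A ∩ {ω | T ω = t}) ∩ {ω | J t ω = j ∧ Xproc S t ω = k} := by
    intro t
    ext ω
    simp only [Set.mem_inter_iff, Set.mem_ofPred_eq]
    constructor
    · rintro ⟨⟨hωA, hω⟩, rfl⟩; exact ⟨⟨hωA, rfl⟩, hω⟩
    · rintro ⟨⟨hωA, rfl⟩, hω⟩; exact ⟨⟨hωA, hω⟩, rfl⟩
  calc P y (A ∩ {ω | J (T ω) ω = j ∧ Xproc S (T ω) ω = k})
      = ∑' t, P y ((A ∩ {ω | T ω = t}) ∩ {ω | J t ω = j ∧ Xproc S t ω = k}) := by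
        rw [measure_eq_tsum_inter_fiber _ T fun t => by
          rw [hset]; exact (hAm.inter (hT t)).inter (hjump t j k)]
        simp only [hset]
    _ = ∑' t, ENNReal.ofReal (q x j k) * P y (A ∩ {ω | T ω = t}) := tsum_congr hpiece
    _ = ENNReal.ofReal (q x j k) * P y A := by
        rw [ENNReal.tsum_mul_left, ← measure_eq_tsum_inter_fiber _ T fun t => hAm.inter (hT t)]

lemma ae_Xproc_succ_ne_zero [Countable E] (hchain : IsMarkovRenewalChain P J S q)
    (hq0 : ∀ i j, q i j 0 = 0) (y : E) : ∀ᵐ ω ∂P y, ∀ n, Xproc S (n + 1) ω ≠ 0 := by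
  refine ae_all_iff.2 fun n => ae_iff.2 ?_
  have hsub : {ω | ¬Xproc S (n + 1) ω ≠ 0} ⊆
      ⋃ x, ⋃ j, {ω | J n ω = x} ∩ {ω | J (n + 1) ω = j ∧ Xproc S (n + 1) ω = 0} :=
    fun ω hω => Set.mem_iUnion₂.2 ⟨J n ω, J (n + 1) ω, rfl, rfl, not_not.1 hω⟩
  refine measure_mono_null hsub (measure_iUnion_null fun x => measure_iUnion_null fun j => ?_)
  rw [measure_inter_jump hchain y (isDeterminedBefore_J_eq (lt_add_one n) x) (fun _ h => h) j 0,
    hq0, ENNReal.ofReal_zero, zero_mul]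

end MarkovProperty

section Recurrence

variable {E Ω : Type} [MeasurableSpace Ω] {q : E → E → ℕ → ℝ} {P : E → Measure Ω}
  {J : ℕ → Ω → E} {S : ℕ → Ω → ℕ} {i : E} {t m : ℕ}

lemma ae_J_zero_eq (hchain : IsMarkovRenewalChain P J S q) (x : E) : ∀ᵐ ω ∂P x, J 0 ω = x := by
  have := hchain.1 x
  have h : ∀ᵐ ω ∂P x, J 0 ω = x ∧ S 0 ω = 0 :=
    (ae_iff_measure_eq ((hchain.2.1 0 x).inter (hchain.2.2.1 0 0)).nullMeasurableSet).2
      (by rw [measure_univ]; exact hchain.2.2.2.1 x)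
  exact h.mono fun _ hω => hω.1

lemma measure_inter_J_zero_eq (hchain : IsMarkovRenewalChain P J S q) (x : E) (B : Set Ω) :
    P x (B ∩ {ω | J 0 ω = x}) = P x B :=
  measure_inter_conull (ae_iff.1 (ae_J_zero_eq hchain x))

lemma measure_J_zero_eq (hchain : IsMarkovRenewalChain P J S q) (x : E) :
    P x {ω | J 0 ω = x} = 1 := by
  have := hchain.1 x
  simpa using measure_inter_J_zero_eq hchain x Set.univ

variable [Countable E]

/-- First-jump analysis: condition on `(J (t + 1), X (t + 1))`, whose law given the past is
`q x · ·`. -/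
lemma measure_inter_avoidSet_succ_eq_tsum (hchain : IsMarkovRenewalChain P J S q) {y : E}
    (ih : ∀ {x : E} {t : ℕ} {A : Set Ω}, IsDeterminedBefore J S (t + 1) A →
      (∀ ω ∈ A, J t ω = x) → P y (A ∩ avoidSet J i t m) = P x (avoidSet J i 0 m) * P y A)
    {x : E} {A : Set Ω} (hA : IsDeterminedBefore J S (t + 1) A) (hx : ∀ ω ∈ A, J t ω = x) :
    P y (A ∩ avoidSet J i (t + 1) m) =
      (∑' p : E × ℕ, P p.1 (avoidSet J i 0 m) * ENNReal.ofReal (q x p.1 p.2)) * P y A := by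
  let f : Ω → E × ℕ := fun ω => (J (t + 1) ω, Xproc S (t + 1) ω)
  have hf : ∀ p, {ω | f ω = p} = {ω | J (t + 1) ω = p.1 ∧ Xproc S (t + 1) ω = p.2} :=
    fun p => by ext; simp [f, Prod.ext_iff]
  have hAp : ∀ p, IsDeterminedBefore J S (t + 1 + 1) (A ∩ {ω | f ω = p}) := fun p => by
    rw [hf]; exact (hA.mono (by omega)).inter (isDeterminedBefore_jump_eq (by omega) _ _)
  have hJp : ∀ p, ∀ ω ∈ A ∩ {ω | f ω = p}, J (t + 1) ω = p.1 := fun p ω hω => by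
    have := hω.2; rw [hf] at this; exact this.1
  rw [measure_inter_eq_tsum_inter_fiber _ f (fun p => (hAp p).measurableSet hchain.2.1 hchain.2.2.1)
    (measurableSet_avoidSet hchain.2.1 i _ _), ← ENNReal.tsum_mul_right]
  refine tsum_congr fun p => ?_
  rw [ih (hAp p) (hJp p), hf, measure_inter_jump hchain y hA hx, mul_assoc]

lemma measure_inter_avoidSet (hchain : IsMarkovRenewalChain P J S q) (i : E) (m : ℕ) :
    ∀ {y x : E} {t : ℕ} {A : Set Ω}, IsDeterminedBefore J S (t + 1) A → (∀ ω ∈ A, J t ω = x) →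
      P y (A ∩ avoidSet J i t m) = P x (avoidSet J i 0 m) * P y A := by
  induction m with
  | zero =>
    intro y x t A _ _
    have := hchain.1 x
    simp [avoidSet_zero]
  | succ m ih =>
    intro y x t A hA hx
    rw [avoidSet_succ, avoidSet_succ (t := 0), ← measure_inter_J_zero_eq hchain x]
    by_cases hxi : x = i
    · subst hxi
      have hAx : A ∩ {ω | J t ω ≠ x} = ∅ := by ext ω; simpa using hx ω
      have h0x : {ω | J 0 ω ≠ x} ∩ avoidSet J x (0 + 1) m ∩ {ω | J 0 ω = x} = ∅ := by
        ext ω; simp only [Set.mem_inter_iff, Set.mem_ofPred_eq, Set.mem_empty_iff_false,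
          iff_false]; tauto
      rw [h0x, ← Set.inter_assoc, hAx]; simp
    · have hA' : A ∩ ({ω | J t ω ≠ i} ∩ avoidSet J i (t + 1) m) = A ∩ avoidSet J i (t + 1) m := by
        ext ω; simp only [Set.mem_inter_iff, Set.mem_ofPred_eq]
        exact ⟨fun h => ⟨h.1, h.2.2⟩, fun h => ⟨h.1, (hx ω h.1).symm ▸ hxi, h.2⟩⟩
      have h0x : {ω | J 0 ω ≠ i} ∩ avoidSet J i (0 + 1) m ∩ {ω | J 0 ω = x} =
          {ω | J 0 ω = x} ∩ avoidSet J i (0 + 1) m := by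
        ext ω; simp only [Set.mem_inter_iff, Set.mem_ofPred_eq]
        exact ⟨fun h => ⟨h.2, h.1.2⟩, fun h => ⟨⟨h.1.symm ▸ hxi, h.2⟩, h.1⟩⟩
      rw [hA', h0x, measure_inter_avoidSet_succ_eq_tsum hchain ih hA hx,
        measure_inter_avoidSet_succ_eq_tsum hchain ih (isDeterminedBefore_J_eq zero_lt_one x)
          fun _ h => h, measure_J_zero_eq hchain x, mul_one]

lemma measure_inter_avoidSet_le (hchain : IsMarkovRenewalChain P J S q) {c : ENNReal}
    (hc : ∀ x, P x (avoidSet J i 0 m) ≤ c) {y : E} {A : Set Ω}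
    (hA : IsDeterminedBefore J S (t + 1) A) : P y (A ∩ avoidSet J i t m) ≤ c * P y A := by
  have hAz : ∀ z, IsDeterminedBefore J S (t + 1) (A ∩ {ω | J t ω = z}) :=
    fun z => hA.inter (isDeterminedBefore_J_eq (lt_add_one t) z)
  have hmeas := fun z => (hAz z).measurableSet hchain.2.1 hchain.2.2.1
  calc P y (A ∩ avoidSet J i t m)
      = ∑' z, P y ((A ∩ {ω | J t ω = z}) ∩ avoidSet J i t m) :=
        measure_inter_eq_tsum_inter_fiber _ (J t) hmeas (measurableSet_avoidSet hchain.2.1 i _ _)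
    _ = ∑' z, P z (avoidSet J i 0 m) * P y (A ∩ {ω | J t ω = z}) :=
        tsum_congr fun z => measure_inter_avoidSet hchain i m (hAz z) fun _ hω => hω.2
    _ ≤ ∑' z, c * P y (A ∩ {ω | J t ω = z}) :=
        ENNReal.tsum_le_tsum fun z => by gcongr; exact hc z
    _ = c * P y A := by rw [ENNReal.tsum_mul_left, ← measure_eq_tsum_inter_fiber _ (J t) hmeas]

lemma measure_inter_avoidSet_mul_le_pow (hchain : IsMarkovRenewalChain P J S q) {c : ENNReal}
    (hc : ∀ x, P x (avoidSet J i 0 m) ≤ c) (R : ℕ) {y : E} :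
    ∀ {t : ℕ} {A : Set Ω}, IsDeterminedBefore J S (t + 1) A →
      P y (A ∩ avoidSet J i t (R * m)) ≤ c ^ R * P y A := by
  induction R with
  | zero => intro t A _; simp [avoidSet_zero]
  | succ R ih =>
    intro t A hA
    have hA' : IsDeterminedBefore J S (t + m + 1) (A ∩ avoidSet J i t m) :=
      (hA.mono (by omega)).inter (isDeterminedBefore_avoidSet (by omega))
    calc P y (A ∩ avoidSet J i t ((R + 1) * m))
        = P y ((A ∩ avoidSet J i t m) ∩ avoidSet J i (t + m) (R * m)) := by
          rw [add_one_mul, add_comm, avoidSet_add, Set.inter_assoc]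
      _ ≤ c ^ R * P y (A ∩ avoidSet J i t m) := ih hA'
      _ ≤ c ^ R * (c * P y A) := by gcongr; exact measure_inter_avoidSet_le hchain hc hA
      _ = c ^ (R + 1) * P y A := by rw [pow_succ, mul_assoc]

end Recurrence

section Irreducible

variable {E Ω : Type} [MeasurableSpace Ω] [Fintype E] {q : E → E → ℕ → ℝ} {P : E → Measure Ω}
  {J : ℕ → Ω → E} {S : ℕ → Ω → ℕ} {i : E}

lemma exists_avoidSet_le_lt_one (hchain : IsMarkovRenewalChain P J S q)
    (hirr : ∀ x, 0 < P x {ω | ∃ n, 1 ≤ n ∧ J n ω = i}) :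
    ∃ m, ∃ c < 1, ∀ x, P x (avoidSet J i 0 m) ≤ c := by
  have hpos : ∀ x, ∃ n, 0 < P x {ω | J n ω = i} := by
    intro x
    by_contra! h
    refine (hirr x).ne' (measure_mono_null (fun ω ⟨n, _, hn⟩ => Set.mem_iUnion.2 ⟨n, hn⟩)
      (measure_iUnion_null fun n => nonpos_iff_eq_zero.1 (h n)))
  choose n hn using hpos
  set m := univ.sup n + 1
  have hlt : ∀ x, P x (avoidSet J i 0 m) < 1 := by
    intro x
    have := hchain.1 x
    calc P x (avoidSet J i 0 m) ≤ P x {ω | J (n x) ω = i}ᶜ :=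
          measure_mono fun ω hω => hω (n x) (Nat.zero_le _)
            (by have := Finset.le_sup (f := n) (mem_univ x); omega)
      _ = 1 - P x {ω | J (n x) ω = i} := prob_compl_eq_one_sub (hchain.2.1 _ i)
      _ < 1 := ENNReal.sub_lt_self ENNReal.one_ne_top one_ne_zero (hn x).ne'
  exact ⟨m, univ.sup fun x => P x (avoidSet J i 0 m),
    (Finset.sup_lt_iff (by simp)).2 fun x _ => hlt x,
    fun x => Finset.le_sup (f := fun x => P x (avoidSet J i 0 m)) (mem_univ x)⟩

lemma ae_frequently_J_eq (hchain : IsMarkovRenewalChain P J S q)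
    (hirr : ∀ x, 0 < P x {ω | ∃ n, 1 ≤ n ∧ J n ω = i}) (y : E) :
    ∀ᵐ ω ∂P y, ∃ᶠ n in atTop, J n ω = i := by
  obtain ⟨m, c, hc1, hc⟩ := exists_avoidSet_le_lt_one hchain hirr
  have := hchain.1 y
  have hnull : ∀ t, P y {ω | ∀ l, t ≤ l → J l ω ≠ i} = 0 := by
    intro t
    have hle : ∀ R, P y {ω | ∀ l, t ≤ l → J l ω ≠ i} ≤ c ^ R := fun R =>
      calc P y {ω | ∀ l, t ≤ l → J l ω ≠ i} ≤ P y (Set.univ ∩ avoidSet J i t (R * m)) :=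
            measure_mono fun ω hω => ⟨trivial, fun l hl _ => hω l hl⟩
        _ ≤ c ^ R * P y Set.univ :=
            measure_inter_avoidSet_mul_le_pow hchain hc R fun _ _ _ h => h
        _ = c ^ R := by rw [measure_univ, mul_one]
    exact nonpos_iff_eq_zero.1
      (ge_of_tendsto' (ENNReal.tendsto_pow_atTop_nhds_zero_of_lt_one hc1) hle)
  rw [ae_iff]
  refine measure_mono_null (fun ω hω => ?_) (measure_iUnion_null hnull)
  simp only [Set.mem_ofPred_eq, not_frequently, eventually_atTop] at hω
  exact Set.mem_iUnion.2 hω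

end Irreducible

section Indicator

variable {Ω : Type*} [MeasurableSpace Ω] {μ : Measure Ω} [IsProbabilityMeasure μ] {A B : Set Ω}

lemma indepFun_indicator_of_measure_inter_eq_mul (hA : MeasurableSet A) (hB : MeasurableSet B)
    (h : μ (A ∩ B) = μ A * μ B) :
    IndepFun (A.indicator fun _ => (1 : ℝ)) (B.indicator fun _ => (1 : ℝ)) μ := by
  rw [IndepFun_iff_Indep]
  refine indep_of_indep_of_le ((indepSet_iff_measure_inter_eq_mul hA hB μ).2 h) ?_ ?_ <;>
  exact Measurable.comap_le (measurable_const.indicator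
    (MeasurableSpace.measurableSet_generateFrom (Set.mem_singleton _)))

lemma identDistrib_indicator_of_measure_eq (hA : MeasurableSet A) (hB : MeasurableSet B)
    (h : μ A = μ B) :
    IdentDistrib (A.indicator fun _ => (1 : ℝ)) (B.indicator fun _ => (1 : ℝ)) μ μ := by
  classical
  refine ⟨(measurable_const.indicator hA).aemeasurable,
    (measurable_const.indicator hB).aemeasurable, Measure.ext fun s hs => ?_⟩
  rw [Measure.map_apply (measurable_const.indicator hA) hs,
    Measure.map_apply (measurable_const.indicator hB) hs,
    Set.indicator_const_preimage_eq_union, Set.indicator_const_preimage_eq_union]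
  by_cases h1 : (1 : ℝ) ∈ s <;> by_cases h0 : (0 : ℝ) ∈ s <;>
    simp [h1, h0, prob_compl_eq_one_sub hA, prob_compl_eq_one_sub hB, h]

end Indicator

section Visits

variable {E Ω : Type} [DecidableEq E] {J : ℕ → Ω → E} {S : ℕ → Ω → ℕ} {i : E} {ω : Ω}

/-- Counts the times `l < n` with `J l ω = i`; the `Icc 1 n`, `l - 1` form makes
`Nvis J S i M ω = visitCount J i (Ncnt S M ω) ω` hold by definition. -/
def visitCount (J : ℕ → Ω → E) (i : E) (n : ℕ) (ω : Ω) : ℕ :=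
  ∑ l ∈ Icc 1 n, if J (l - 1) ω = i then 1 else 0

lemma visitCount_zero : visitCount J i 0 ω = 0 := by simp [visitCount]

lemma visitCount_succ (n : ℕ) :
    visitCount J i (n + 1) ω = visitCount J i n ω + if J n ω = i then 1 else 0 := by
  rw [visitCount, sum_Icc_succ_top (by omega)]; rfl

lemma visitCount_mono : Monotone (visitCount J i · ω) :=
  monotone_nat_of_le_succ fun n => by rw [visitCount_succ]; omega

lemma visitCount_succ_le (n : ℕ) : visitCount J i (n + 1) ω ≤ visitCount J i n ω + 1 := by
  rw [visitCount_succ]; split <;> omega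

lemma exists_visitCount_eq {v t : ℕ} (hv : 1 ≤ v) (h : v ≤ visitCount J i t ω) :
    ∃ n, 1 ≤ n ∧ n ≤ t ∧ visitCount J i n ω = v := by
  induction t with
  | zero => rw [visitCount_zero] at h; omega
  | succ t ih =>
    by_cases ht : v ≤ visitCount J i t ω
    · obtain ⟨n, h1, h2, h3⟩ := ih ht
      exact ⟨n, h1, by omega, h3⟩
    · have := visitCount_succ_le (J := J) (i := i) (ω := ω) t
      exact ⟨t + 1, by omega, le_rfl, by omega⟩

lemma tendsto_visitCount_atTop (h : ∃ᶠ n in atTop, J n ω = i) :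
    Tendsto (visitCount J i · ω) atTop atTop := by
  refine tendsto_atTop_atTop_of_monotone visitCount_mono fun m => ?_
  induction m with
  | zero => exact ⟨0, Nat.zero_le _⟩
  | succ m ih =>
    obtain ⟨n, hn⟩ := ih
    obtain ⟨l, hl, hJl⟩ := frequently_atTop.1 h n
    refine ⟨l + 1, ?_⟩
    rw [visitCount_succ, if_pos hJl]
    have : visitCount J i n ω ≤ visitCount J i l ω := visitCount_mono hl
    omega

/-- The index `n` of the jump that ends the `(m + 1)`-st visit of `J` to `i`, so that
`J (n - 1) ω = i`; it is `0` if there are at most `m` visits. -/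
def jumpAfterVisit (J : ℕ → Ω → E) (i : E) (m : ℕ) (ω : Ω) : ℕ :=
  sInf {n | 1 ≤ n ∧ visitCount J i n ω = m + 1}

variable {m t : ℕ}

lemma jumpAfterVisit_eq_succ_iff :
    jumpAfterVisit J i m ω = t + 1 ↔ visitCount J i t ω = m ∧ J t ω = i := by
  constructor
  · intro h
    have hne : {n | 1 ≤ n ∧ visitCount J i n ω = m + 1}.Nonempty := by
      by_contra hne
      simp [jumpAfterVisit, Set.not_nonempty_iff_eq_empty.1 hne] at h
    have hmem := Nat.sInf_mem hne
    change jumpAfterVisit J i m ω ∈ _ at hmem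
    rw [h] at hmem
    replace hmem := hmem.2
    have hprev : visitCount J i t ω ≠ m + 1 := by
      rcases t with _ | t
      · rw [visitCount_zero]; omega
      · exact fun ht => Nat.notMem_of_lt_sInf (show t + 1 < jumpAfterVisit J i m ω by omega)
          ⟨by omega, ht⟩
    rw [visitCount_succ] at hmem
    split_ifs at hmem with hJ
    · exact ⟨by omega, hJ⟩
    · omega
  · rintro ⟨hv, hJ⟩
    have hmem : t + 1 ∈ {n | 1 ≤ n ∧ visitCount J i n ω = m + 1} :=
      ⟨by omega, by rw [visitCount_succ, if_pos hJ, hv]⟩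
    refine le_antisymm (Nat.sInf_le hmem) (le_csInf ⟨_, hmem⟩ fun b hb => ?_)
    by_contra! hb'
    have : visitCount J i b ω ≤ visitCount J i t ω := visitCount_mono (by omega)
    have := hb.2
    omega

lemma jumpAfterVisit_mem_Icc_of_le (h : m + 1 ≤ visitCount J i t ω) :
    jumpAfterVisit J i m ω ∈ Icc 1 t := by
  obtain ⟨n, h1, h2, h3⟩ := exists_visitCount_eq (by omega) h
  have hmem : n ∈ {n | 1 ≤ n ∧ visitCount J i n ω = m + 1} := ⟨h1, h3⟩
  exact mem_Icc.2 ⟨(Nat.sInf_mem ⟨n, hmem⟩).1, (Nat.sInf_le hmem).trans h2⟩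

lemma visitCount_congr {ω' : Ω} (h : pathPrefix J S t ω = pathPrefix J S t ω') {n : ℕ}
    (hn : n ≤ t) : visitCount J i n ω = visitCount J i n ω' :=
  sum_congr rfl fun l hl => by
    rw [(pathPrefix_eq_iff.1 h (l - 1) (by rw [mem_Icc] at hl; omega)).1]

lemma isDeterminedBefore_jumpAfterVisit_eq (m t : ℕ) :
    IsDeterminedBefore J S (t + 1) {ω | jumpAfterVisit J i m ω = t + 1} := fun ω ω' h hω => by
  rw [Set.mem_ofPred_eq, jumpAfterVisit_eq_succ_iff] at hω ⊢
  rwa [← visitCount_congr h (Nat.le_succ t), ← (pathPrefix_eq_iff.1 h t (lt_add_one t)).1]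

def markSet (J : ℕ → Ω → E) (S : ℕ → Ω → ℕ) (i j : E) (k m : ℕ) : Set Ω :=
  {ω | J (jumpAfterVisit J i m ω) ω = j ∧ Xproc S (jumpAfterVisit J i m ω) ω = k}

def mark (J : ℕ → Ω → E) (S : ℕ → Ω → ℕ) (i j : E) (k m : ℕ) : Ω → ℝ :=
  (markSet J S i j k m).indicator fun _ => 1

variable {j : E} {k : ℕ}

lemma isDeterminedBefore_markSet_inter {m' : ℕ} (hm : m < m') (t : ℕ) :
    IsDeterminedBefore J S (t + 1)
      (markSet J S i j k m ∩ {ω | jumpAfterVisit J i m' ω = t + 1}) := by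
  rintro ω ω' h ⟨hmark, hT⟩
  have hvis := (jumpAfterVisit_eq_succ_iff.1 hT).1
  obtain ⟨h1, h2⟩ :=
    mem_Icc.1 (jumpAfterVisit_mem_Icc_of_le (show m + 1 ≤ visitCount J i t ω by omega))
  obtain ⟨s, hs⟩ : ∃ s, jumpAfterVisit J i m ω = s + 1 := ⟨_, (Nat.succ_pred_eq_of_pos h1).symm⟩
  have hs' : jumpAfterVisit J i m ω' = s + 1 :=
    ((isDeterminedBefore_jumpAfterVisit_eq m s).mono (by omega)) ω ω' h hs
  obtain ⟨hJ, hX⟩ := pathPrefix_eq_iff.1 h (s + 1) (by omega)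
  refine ⟨?_, isDeterminedBefore_jumpAfterVisit_eq m' t ω ω' h hT⟩
  simp only [markSet, Set.mem_ofPred_eq, hs, hs'] at hmark ⊢
  rwa [← hJ, ← hX]

lemma sum_Icc_ite_eq_sum_mark (n : ℕ) :
    (∑ l ∈ Icc 1 n, if J (l - 1) ω = i ∧ J l ω = j ∧ Xproc S l ω = k then (1 : ℝ) else 0) =
      ∑ m ∈ range (visitCount J i n ω), mark J S i j k m ω := by
  induction n with
  | zero => simp [visitCount_zero]
  | succ n ih =>
    rw [sum_Icc_succ_top (by omega), visitCount_succ, ih, Nat.add_sub_cancel]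
    by_cases h : J n ω = i
    · have hT : jumpAfterVisit J i (visitCount J i n ω) ω = n + 1 :=
        jumpAfterVisit_eq_succ_iff.2 ⟨rfl, h⟩
      rw [if_pos h, sum_range_succ]
      simp only [mark, markSet, Set.indicator_apply, Set.mem_ofPred_eq, hT, h, true_and]
    · simp [h]

lemma qhat_eq_sum_mark_div (M : ℕ) :
    qhat J S M ω i j k =
      (∑ m ∈ range (Nvis J S i M ω), mark J S i j k m ω) / Nvis J S i M ω := by
  rw [qhat, sum_Icc_ite_eq_sum_mark]; rfl

end Visits

section Marks

variable {E Ω : Type} [MeasurableSpace Ω] [DecidableEq E] {q : E → E → ℕ → ℝ}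
  {P : E → Measure Ω} {J : ℕ → Ω → E} {S : ℕ → Ω → ℕ} {i j : E} {k m : ℕ}

lemma measurableSet_jumpAfterVisit_eq [Countable E] (hJ : ∀ n z, MeasurableSet {ω | J n ω = z})
    (hS : ∀ n b, MeasurableSet {ω | S n ω = b}) (t : ℕ) :
    MeasurableSet {ω | jumpAfterVisit J i m ω = t} := by
  rcases t with _ | t
  · have : {ω | jumpAfterVisit J i m ω = 0} = (⋃ t, {ω | jumpAfterVisit J i m ω = t + 1})ᶜ := by
      ext ω
      simp only [Set.mem_ofPred_eq, Set.mem_compl_iff, Set.mem_iUnion, not_exists]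
      exact ⟨fun h t => by omega,
        fun h => by by_contra h'; exact h _ (Nat.succ_pred_eq_of_ne_zero h').symm⟩
    rw [this]
    exact (MeasurableSet.iUnion fun t =>
      (isDeterminedBefore_jumpAfterVisit_eq (S := S) m t).measurableSet hJ hS).compl
  · exact (isDeterminedBefore_jumpAfterVisit_eq m t).measurableSet hJ hS

lemma measurableSet_markSet [Countable E] (hJ : ∀ n z, MeasurableSet {ω | J n ω = z})
    (hS : ∀ n b, MeasurableSet {ω | S n ω = b}) : MeasurableSet (markSet J S i j k m) := by
  have : markSet J S i j k m =
      ⋃ t, {ω | jumpAfterVisit J i m ω = t} ∩ {ω | J t ω = j ∧ Xproc S t ω = k} := by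
    ext ω
    simp only [markSet, Set.mem_ofPred_eq, Set.mem_iUnion, Set.mem_inter_iff]
    exact ⟨fun h => ⟨_, rfl, h⟩, fun ⟨_, rfl, h⟩ => h⟩
  rw [this]
  exact .iUnion fun t =>
    (measurableSet_jumpAfterVisit_eq hJ hS t).inter (measurableSet_jump_eq hJ hS t j k)

variable [Fintype E]

lemma measure_jumpAfterVisit_eq_zero (hchain : IsMarkovRenewalChain P J S q)
    (hirr : ∀ x, 0 < P x {ω | ∃ n, 1 ≤ n ∧ J n ω = i}) (y : E) (m : ℕ) :
    P y {ω | jumpAfterVisit J i m ω = 0} = 0 := by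
  refine measure_mono_null (fun ω (hω : jumpAfterVisit J i m ω = 0) => show ¬_ from fun hvis => ?_)
    (ae_iff.1 (ae_frequently_J_eq hchain hirr y))
  obtain ⟨t, ht⟩ := ((tendsto_visitCount_atTop hvis).eventually_ge_atTop (m + 1)).exists
  have := (mem_Icc.1 (jumpAfterVisit_mem_Icc_of_le ht)).1
  omega

lemma measure_markSet (hchain : IsMarkovRenewalChain P J S q)
    (hirr : ∀ x, 0 < P x {ω | ∃ n, 1 ≤ n ∧ J n ω = i}) (y : E) :
    P y (markSet J S i j k m) = ENNReal.ofReal (q i j k) := by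
  have := hchain.1 y
  have h := measure_inter_jump_at hchain y .univ
    (measurableSet_jumpAfterVisit_eq hchain.2.1 hchain.2.2.1)
    (measure_jumpAfterVisit_eq_zero hchain hirr y m)
    (fun t => by simpa using isDeterminedBefore_jumpAfterVisit_eq m t)
    (fun _ _ h => (jumpAfterVisit_eq_succ_iff.1 h).2) j k
  rwa [Set.univ_inter, measure_univ, mul_one] at h

lemma measure_markSet_inter (hchain : IsMarkovRenewalChain P J S q)
    (hirr : ∀ x, 0 < P x {ω | ∃ n, 1 ≤ n ∧ J n ω = i}) (y : E) {m' : ℕ} (hm : m < m') :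
    P y (markSet J S i j k m ∩ markSet J S i j k m') =
      ENNReal.ofReal (q i j k) * P y (markSet J S i j k m) :=
  measure_inter_jump_at hchain y (measurableSet_markSet hchain.2.1 hchain.2.2.1)
    (measurableSet_jumpAfterVisit_eq hchain.2.1 hchain.2.2.1)
    (measure_jumpAfterVisit_eq_zero hchain hirr y m') (isDeterminedBefore_markSet_inter hm)
    (fun _ _ h => (jumpAfterVisit_eq_succ_iff.1 h).2) j k

lemma ae_tendsto_sum_mark_div (hchain : IsMarkovRenewalChain P J S q)
    (hirr : ∀ x, 0 < P x {ω | ∃ n, 1 ≤ n ∧ J n ω = i}) (hq : 0 ≤ q i j k) (y : E) :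
    ∀ᵐ ω ∂P y, Tendsto (fun n : ℕ => (∑ m ∈ range n, mark J S i j k m ω) / n) atTop
      (𝓝 (q i j k)) := by
  have := hchain.1 y
  have hmeas : ∀ m, MeasurableSet (markSet J S i j k m) :=
    fun m => measurableSet_markSet hchain.2.1 hchain.2.2.1
  have hprob : ∀ m, P y (markSet J S i j k m) = ENNReal.ofReal (q i j k) :=
    fun m => measure_markSet hchain hirr y
  have hindep : Pairwise (Function.onFun (IndepFun · · (P y)) (mark J S i j k)) := by
    have hlt : ∀ m m', m < m' → IndepFun (mark J S i j k m) (mark J S i j k m') (P y) :=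
      fun m m' h => indepFun_indicator_of_measure_inter_eq_mul (hmeas m) (hmeas m')
        (by rw [measure_markSet_inter hchain hirr y h, hprob m', mul_comm])
    intro m m' hne
    rcases hne.lt_or_gt with h | h
    exacts [hlt m m' h, (hlt m' m h).symm]
  have hmean : (P y)[mark J S i j k 0] = q i j k := by
    rw [mark, integral_indicator_const _ (hmeas 0), measureReal_def, hprob 0, smul_eq_mul, mul_one,
      ENNReal.toReal_ofReal hq]
  simpa only [hmean] using strong_law_ae_real (mark J S i j k)
    ((integrable_const (1 : ℝ)).indicator (hmeas 0)) hindep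
    fun m => identDistrib_indicator_of_measure_eq (hmeas m) (hmeas 0)
      ((hprob m).trans (hprob 0).symm)

end Marks

section Estimator

variable {E Ω : Type} [DecidableEq E] {J : ℕ → Ω → E} {S : ℕ → Ω → ℕ} {ω : Ω}

lemma tendsto_Ncnt_atTop (hX : ∀ n, Xproc S (n + 1) ω ≠ 0) :
    Tendsto (fun M => Ncnt S M ω) atTop atTop := by
  have hS : StrictMono (S · ω) := strictMono_nat_of_lt_succ fun n => by
    have := hX n
    simp only [Xproc, Nat.add_sub_cancel] at this
    omega
  exact tendsto_atTop_atTop.2 fun n =>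
    ⟨S n ω, fun M hM => le_csSup ⟨M, fun b hb => (hS.id_le b).trans hb⟩ hM⟩

lemma qhat_apply_zero (hX : ∀ n, Xproc S (n + 1) ω ≠ 0) (M : ℕ) (i j : E) :
    qhat J S M ω i j 0 = 0 := by
  rw [qhat, sum_eq_zero, zero_div]
  intro n hn
  obtain ⟨n, rfl⟩ : ∃ n', n = n' + 1 := ⟨n - 1, by rw [mem_Icc] at hn; omega⟩
  exact if_neg fun h => hX n h.2.2

variable [MeasurableSpace Ω] {q : E → E → ℕ → ℝ} {P : E → Measure Ω}

lemma ae_tendsto_qhat [Fintype E] (hq : IsSemiMarkovKernel q)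
    (hchain : IsMarkovRenewalChain P J S q)
    (hirr : ∀ x i, 0 < P x {ω | ∃ n, 1 ≤ n ∧ J n ω = i}) (y : E) :
    ∀ᵐ ω ∂P y, ∀ i j k, Tendsto (fun M => qhat J S M ω i j k) atTop (𝓝 (q i j k)) := by
  have hlim : ∀ᵐ ω ∂P y, ∀ i j k, Tendsto
      (fun n : ℕ => (∑ m ∈ range n, mark J S i j k m ω) / n) atTop (𝓝 (q i j k)) := by
    simp only [ae_all_iff]
    exact fun i j k => ae_tendsto_sum_mark_div hchain (fun x => hirr x i) (hq.1 i j k) y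
  filter_upwards [hlim, ae_all_iff.2 fun i => ae_frequently_J_eq hchain (fun x => hirr x i) y,
    ae_Xproc_succ_ne_zero hchain hq.2.1 y] with ω hlim hvis hX i j k
  simp only [qhat_eq_sum_mark_div]
  exact (hlim i j k).comp ((tendsto_visitCount_atTop (hvis i)).comp (tendsto_Ncnt_atTop hX))

end Estimator

variable {E : Type} [Fintype E] [DecidableEq E] {Ω : Type} [MeasurableSpace Ω]

/-- Strong consistency of the estimator of the matrix convolution inverse
(Barbu–Limnios, Theorem 4.4). -/
theorem statement3 (q : E → E → ℕ → ℝ) (P : E → Measure Ω) (J : ℕ → Ω → E) (S : ℕ → Ω → ℕ)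
    (hq : IsSemiMarkovKernel q) (hchain : IsMarkovRenewalChain P J S q)
    (hA : AssumptionA P J S) (i₀ : E) :
    ∀ᵐ ω ∂(P i₀), ∀ (i j : E) (k : ℕ),
      Tendsto (fun M : ℕ => psiOf (qhat J S M ω) i j k) atTop (𝓝 (psiOf q i j k)) := by
  filter_upwards [ae_tendsto_qhat hq hchain hA.1 i₀, ae_Xproc_succ_ne_zero hchain hq.2.1 i₀]
    with ω hlim hX i j k
  exact tendsto_psiOf_apply hlim (fun M => qhat_apply_zero hX M) hq.2.1 i j k

end SMCPaper
end
end
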